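/- arXiv:2508.13422 — 7 statements merged into one kernel-verified Lean document; each statement's English description precedes it below -/
import Mathlib

section
/- For any integrable random variable X, any p ∈ (0,1) and any α ∈ [0,1], TVaR_p[X] = F_X^{-1(α)}(p) + (1/(1-p)) · E[(X - F_X^{-1(α)}(p))_+], where F_X^{-1(α)}(p) = (1-α)F_X^{-1}(p) + α F_X^{-1+}(p). -/
open MeasureTheory Set Filter Topology

/-- Right-continuity-style estimate for the CDF. -/
lemma aux_cdf_rc {Ω : Type*} [MeasurableSpace Ω] (μ : Measure Ω) [IsProbabilityMeasure μ]
    (X' : Ω → ℝ) (hm : Measurable X') (y c : ℝ)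
    (h : ∀ x, y < x → c ≤ (μ {ω | X' ω ≤ x}).toReal) :
    c ≤ (μ {ω | X' ω ≤ y}).toReal := by
  set s : ℕ → Set Ω := fun n => {ω | X' ω ≤ y + 1 / (n + 1)} with hs
  have hmeas : ∀ n, NullMeasurableSet (s n) μ := fun n =>
    (hm measurableSet_Iic).nullMeasurableSet
  have hanti : Antitone s := by
    intro m n hmn ω hω
    have h1 : (1:ℝ) / (n + 1) ≤ 1 / (m + 1) := by
      apply one_div_le_one_div_of_le
      · positivity
      · exact_mod_cast Nat.add_le_add_right hmn 1
    simp only [hs, mem_setOf_eq] at hω ⊢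
    linarith
  have hiInter : ⋂ n, s n = {ω | X' ω ≤ y} := by
    ext ω
    simp only [mem_iInter, mem_setOf_eq, hs]
    constructor
    · intro hω
      by_contra hlt
      push_neg at hlt
      obtain ⟨n, hn⟩ := exists_nat_one_div_lt (sub_pos.2 hlt)
      exact absurd (hω n) (by push_neg; linarith)
    · intro hω n
      have : (0:ℝ) < 1 / (n + 1) := by positivity
      linarith
  have htend : Tendsto (μ ∘ s) atTop (𝓝 (μ {ω | X' ω ≤ y})) := by
    rw [← hiInter]
    exact tendsto_measure_iInter_atTop hmeas hanti ⟨0, measure_ne_top μ _⟩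
  have htend' : Tendsto (fun n => (μ (s n)).toReal) atTop
      (𝓝 ((μ {ω | X' ω ≤ y}).toReal)) :=
    (ENNReal.tendsto_toReal (measure_ne_top μ _)).comp htend
  refine ge_of_tendsto' htend' fun n => ?_
  refine h _ ?_
  have : (0:ℝ) < 1 / ((n:ℝ) + 1) := by positivity
  linarith

/-- `TVaR_p[X] = F_X^{-1(α)}(p) + (1/(1-p)) E[(X - F_X^{-1(α)}(p))_+]`. -/
theorem tvar_eq_genquantile_add_stoploss {Ω : Type*} [MeasurableSpace Ω] (μ : Measure Ω)
    [IsProbabilityMeasure μ] (X : Ω → ℝ) (hX : Integrable X μ)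
    (p α : ℝ) (hp : p ∈ Set.Ioo (0:ℝ) 1) (hα : α ∈ Set.Icc (0:ℝ) 1)
    (F Q R : ℝ → ℝ)
    (hF : ∀ y, F y = (μ {ω | X ω ≤ y}).toReal)
    (hQ : ∀ q, Q q = sInf {x : ℝ | q ≤ F x})
    (hR : ∀ q, R q = sSup {x : ℝ | F x ≤ q}) :
    (1 / (1 - p)) * ∫ q in p..1, Q q =
      ((1 - α) * Q p + α * R p) +
        (1 / (1 - p)) * ∫ ω, max (X ω - ((1 - α) * Q p + α * R p)) 0 ∂μ := by
  obtain ⟨hp0, hp1⟩ := hp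
  obtain ⟨hα0, hα1⟩ := hα
  -- measurable representative
  set X' : Ω → ℝ := hX.1.mk X with hX'def
  have hX'm : Measurable X' := hX.1.measurable_mk
  have hXX' : X =ᵐ[μ] X' := hX.1.ae_eq_mk
  have hFy : ∀ y, F y = (μ {ω | X' ω ≤ y}).toReal := by
    intro y
    rw [hF y]
    refine congrArg ENNReal.toReal (measure_congr ?_)
    filter_upwards [hXX'] with ω h
    change (X ω ≤ y) = (X' ω ≤ y)
    rw [h]
  have hmeasle : ∀ y, MeasurableSet {ω | X' ω ≤ y} := fun y => hX'm measurableSet_Iic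
  have hF0 : ∀ y, 0 ≤ F y := fun y => (hFy y) ▸ ENNReal.toReal_nonneg
  have hF1 : ∀ y, F y ≤ 1 := by
    intro y
    rw [hFy y]
    have := ENNReal.toReal_mono (by simp) (prob_le_one (μ := μ) (s := {ω | X' ω ≤ y}))
    simpa using this
  have hFmono : Monotone F := by
    intro a b hab
    rw [hFy a, hFy b]
    exact (ENNReal.toReal_le_toReal (measure_ne_top μ _) (measure_ne_top μ _)).2
      (measure_mono fun ω (h : X' ω ≤ a) => le_trans h hab)
  have hrc : ∀ y c, (∀ x, y < x → c ≤ F x) → c ≤ F y := by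
    intro y c h
    rw [hFy y]
    exact aux_cdf_rc μ X' hX'm y c fun x hx => (hFy x) ▸ h x hx
  -- complement formula
  have hcompl : ∀ y, (μ {ω | y < X' ω}).toReal = 1 - F y := by
    intro y
    have hset : {ω | y < X' ω} = {ω | X' ω ≤ y}ᶜ := by
      ext ω; simp [not_le]
    rw [hset, measure_compl (hmeasle y) (measure_ne_top μ _)]
    rw [ENNReal.toReal_sub_of_le (measure_mono (subset_univ _)) (measure_ne_top μ _)]
    simp [hFy y]
  have hcomplE : ∀ y, μ {ω | y < X' ω} = ENNReal.ofReal (1 - F y) := by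
    intro y
    rw [← hcompl y, ENNReal.ofReal_toReal (measure_ne_top μ _)]
  -- existence of small/large cdf values
  have hex_lt : ∀ c, 0 < c → ∃ x, F x < c := by
    intro c hc
    set s : ℕ → Set Ω := fun n => {ω | X' ω ≤ -(n : ℝ)} with hs
    have hanti : Antitone s := by
      intro m n hmn ω hω
      simp only [hs, mem_setOf_eq] at hω ⊢
      have : (m:ℝ) ≤ (n:ℝ) := Nat.cast_le.2 hmn
      linarith
    have hiInter : ⋂ n, s n = (∅ : Set Ω) := by
      ext ω
      simp only [mem_iInter, mem_setOf_eq, mem_empty_iff_false, iff_false, not_forall, hs]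
      obtain ⟨n, hn⟩ := exists_nat_gt (-(X' ω))
      exact ⟨n, by push_neg; linarith⟩
    have htend : Tendsto (μ ∘ s) atTop (𝓝 0) := by
      have := tendsto_measure_iInter_atTop
        (fun n => (hmeasle _).nullMeasurableSet) hanti ⟨0, measure_ne_top μ _⟩
      rwa [hiInter, measure_empty] at this
    have htend' : Tendsto (fun n => (μ (s n)).toReal) atTop (𝓝 0) := by
      have := (ENNReal.tendsto_toReal (by simp : (0:ENNReal) ≠ ⊤)).comp htend
      simpa [Function.comp_def] using this
    obtain ⟨n, hn⟩ := (htend'.eventually_lt_const hc).exists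
    exact ⟨-(n:ℝ), by rw [hFy]; exact hn⟩
  have hex_ge : ∀ c, c < 1 → ∃ x, c ≤ F x := by
    intro c hc
    set s : ℕ → Set Ω := fun n => {ω | (n : ℝ) < X' ω} with hs
    have hanti : Antitone s := by
      intro m n hmn ω hω
      simp only [hs, mem_setOf_eq] at hω ⊢
      have : (m:ℝ) ≤ (n:ℝ) := Nat.cast_le.2 hmn
      linarith
    have hiInter : ⋂ n, s n = (∅ : Set Ω) := by
      ext ω
      simp only [mem_iInter, mem_setOf_eq, mem_empty_iff_false, iff_false, not_forall, hs]
      obtain ⟨n, hn⟩ := exists_nat_gt (X' ω)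
      exact ⟨n, by push_neg; linarith⟩
    have hmeas : ∀ n, NullMeasurableSet (s n) μ := by
      intro n
      have : s n = {ω | X' ω ≤ (n:ℝ)}ᶜ := by ext ω; simp [hs, not_le]
      rw [this]
      exact (hmeasle _).compl.nullMeasurableSet
    have htend : Tendsto (μ ∘ s) atTop (𝓝 0) := by
      have := tendsto_measure_iInter_atTop hmeas hanti ⟨0, measure_ne_top μ _⟩
      rwa [hiInter, measure_empty] at this
    have htend' : Tendsto (fun n => (μ (s n)).toReal) atTop (𝓝 0) := by
      have := (ENNReal.tendsto_toReal (by simp : (0:ENNReal) ≠ ⊤)).comp htend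
      simpa [Function.comp_def] using this
    obtain ⟨n, hn⟩ := (htend'.eventually_lt_const (by linarith : (0:ℝ) < 1 - c)).exists
    refine ⟨(n:ℝ), ?_⟩
    have := hcompl (n:ℝ)
    rw [hs] at hn
    simp only at hn
    linarith [this ▸ hn]
  -- quantile basics
  have hSbdd : ∀ q, 0 < q → BddBelow {x : ℝ | q ≤ F x} := by
    intro q hq
    obtain ⟨x₀, hx₀⟩ := hex_lt q hq
    refine ⟨x₀, fun x hx => ?_⟩
    by_contra hlt
    push_neg at hlt
    exact absurd (le_trans hx (hFmono hlt.le)) (not_le.2 hx₀)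
  have hSne : ∀ q, q < 1 → {x : ℝ | q ≤ F x}.Nonempty := fun q hq => hex_ge q hq
  have hQle : ∀ q y, 0 < q → q ≤ F y → Q q ≤ y := by
    intro q y hq hqy
    rw [hQ q]
    exact csInf_le (hSbdd q hq) hqy
  have hFQ : ∀ q, 0 < q → q < 1 → q ≤ F (Q q) := by
    intro q hq0 hq1
    refine hrc _ _ fun x hx => ?_
    rw [hQ q] at hx
    obtain ⟨s, hs, hsx⟩ := exists_lt_of_csInf_lt (hSne q hq1) hx
    exact le_trans hs (hFmono hsx.le)
  have hQgt : ∀ q y, 0 < q → q < 1 → F y < q → y < Q q := by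
    intro q y hq0 hq1 hlt
    by_contra h
    push_neg at h
    exact absurd (le_trans (hFQ q hq0 hq1) (hFmono h)) (not_le.2 hlt)
  -- T facts
  have hTbdd : BddAbove {x : ℝ | F x ≤ p} := by
    obtain ⟨x₁, hx₁⟩ := hex_ge ((p+1)/2) (by linarith)
    refine ⟨x₁, fun x hx => ?_⟩
    by_contra hlt
    push_neg at hlt
    have := le_trans hx₁ (hFmono hlt.le)
    simp only [mem_setOf_eq] at hx
    linarith
  have hQpRp : Q p ≤ R p := by
    by_contra h
    push_neg at h
    set z := (R p + Q p) / 2 with hz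
    have hz1 : R p < z := by rw [hz]; linarith
    have hz2 : z < Q p := by rw [hz]; linarith
    have hFz : F z < p := by
      by_contra hge
      push_neg at hge
      exact absurd (hQle p z hp0 hge) (not_le.2 hz2)
    have : z ≤ R p := by
      rw [hR p]
      exact le_csSup hTbdd hFz.le
    linarith
  set d : ℝ := (1 - α) * Q p + α * R p with hd
  have hd1 : Q p ≤ d := by nlinarith [mul_nonneg hα0 (sub_nonneg.2 hQpRp)]
  have hd2 : d ≤ R p := by nlinarith [mul_nonneg (by linarith : (0:ℝ) ≤ 1 - α) (sub_nonneg.2 hQpRp)]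
  have hRpQ : ∀ q, p < q → q < 1 → R p ≤ Q q := by
    intro q hpq hq1
    rw [hR p]
    refine csSup_le ⟨_, (hex_lt p hp0).choose_spec.le⟩ fun x hx => ?_
    rw [hQ q]
    refine le_csInf (hSne q hq1) fun s hs => ?_
    by_contra hlt
    push_neg at hlt
    simp only [mem_setOf_eq] at hx hs
    have := hFmono hlt.le
    linarith
  have hFd : ∀ y, d ≤ y → p ≤ F y :=
    fun y hy => le_trans (hFQ p hp0 hp1) (hFmono (le_trans hd1 hy))
  -- monotonicity of Q on Ioo p 1
  have hQmonoOn : MonotoneOn Q (Ioo p 1) := by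
    intro a ha b hb hab
    rw [hQ a, hQ b]
    exact csInf_le_csInf (hSbdd a (lt_trans hp0 ha.1)) (hSne b hb.2)
      (fun x hx => le_trans hab hx)
  have hQnn : ∀ q ∈ Ioo p 1, d ≤ Q q := fun q hq => le_trans hd2 (hRpQ q hq.1 hq.2)
  -- the key measure identity
  have hmeaseq : ∀ t ∈ Ioi (0:ℝ),
      (volume.restrict (Ioc p 1)) {q | t < Q q - d} = μ {ω | t < max (X' ω - d) 0} := by
    intro t ht
    simp only [mem_Ioi] at ht
    have hset2 : {ω | t < max (X' ω - d) 0} = {ω | d + t < X' ω} := by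
      ext ω
      simp only [mem_setOf_eq, lt_max_iff]
      constructor
      · rintro (h | h)
        · linarith
        · linarith
      · intro h; left; linarith
    set c := F (d + t) with hc
    have hcp : p ≤ c := hFd _ (by linarith)
    have hc1 : c ≤ 1 := hF1 _
    have hsetQ : {q | t < Q q - d} ∩ Ioo p 1 = Ioo c 1 := by
      ext q
      simp only [mem_inter_iff, mem_setOf_eq, mem_Ioo]
      constructor
      · rintro ⟨hq, hqp, hq1⟩
        refine ⟨?_, hq1⟩
        by_contra hle
        push_neg at hle
        have := hQle q (d + t) (lt_trans hp0 hqp) (le_trans hle (le_refl c))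
        linarith
      · rintro ⟨hcq, hq1⟩
        have hqp : p < q := lt_of_le_of_lt hcp hcq
        have := hQgt q (d + t) (lt_trans hp0 hqp) hq1 hcq
        exact ⟨by linarith, hqp, hq1⟩
    rw [Measure.restrict_apply' measurableSet_Ioc, hset2, hcomplE]
    have hae : volume ({q | t < Q q - d} ∩ Ioc p 1) = volume ({q | t < Q q - d} ∩ Ioo p 1) :=
      measure_congr (MeasureTheory.ae_eq_set_inter (Filter.EventuallyEq.refl _ _)
        Ioo_ae_eq_Ioc.symm)
    rw [hae, hsetQ, Real.volume_Ioo]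
  -- AEMeasurability of Q on the restricted measure
  have hrestr : volume.restrict (Ioc p 1) = volume.restrict (Ioo p 1) :=
    (Measure.restrict_congr_set Ioo_ae_eq_Ioc).symm
  have hQaem : AEMeasurable Q (volume.restrict (Ioc p 1)) := by
    rw [hrestr]
    exact aemeasurable_restrict_of_monotoneOn measurableSet_Ioo hQmonoOn
  have hQdaem : AEMeasurable (fun q => Q q - d) (volume.restrict (Ioc p 1)) :=
    hQaem.sub aemeasurable_const
  have hQdnn : 0 ≤ᵐ[volume.restrict (Ioc p 1)] fun q => Q q - d := by
    rw [hrestr]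
    filter_upwards [ae_restrict_mem measurableSet_Ioo] with q hq
    exact sub_nonneg.2 (hQnn q hq)
  -- layer cake on both sides
  have hmaxnn : 0 ≤ᵐ[μ] fun ω => max (X' ω - d) 0 := ae_of_all μ fun ω => le_max_right _ _
  have hmaxaem : AEMeasurable (fun ω => max (X' ω - d) 0) μ :=
    ((hX'm.sub measurable_const).max measurable_const).aemeasurable
  have keyL : ∫⁻ q in Ioc p 1, ENNReal.ofReal (Q q - d) =
      ∫⁻ ω, ENNReal.ofReal (max (X' ω - d) 0) ∂μ := by
    rw [lintegral_eq_lintegral_meas_lt _ hQdnn hQdaem,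
      lintegral_eq_lintegral_meas_lt μ hmaxnn hmaxaem]
    exact setLIntegral_congr_fun measurableSet_Ioi hmeaseq
  -- integrability
  have Ipos' : Integrable (fun ω => max (X' ω - d) 0) μ :=
    ((hX.congr hXX').sub (integrable_const d)).pos_part
  have Ipos : Integrable (fun ω => max (X ω - d) 0) μ := by
    refine Ipos'.congr ?_
    filter_upwards [hXX'] with ω h
    rw [h]
  have hfin : ∫⁻ ω, ENNReal.ofReal (max (X' ω - d) 0) ∂μ < ⊤ := Ipos'.lintegral_lt_top
  have IQ : Integrable (fun q => Q q - d) (volume.restrict (Ioc p 1)) := by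
    refine ⟨hQdaem.aestronglyMeasurable, ?_⟩
    rw [hasFiniteIntegral_iff_ofReal hQdnn, keyL]
    exact hfin
  -- Bochner conversions
  have B1 : ∫ q in Ioc p 1, (Q q - d) =
      (∫⁻ q in Ioc p 1, ENNReal.ofReal (Q q - d)).toReal := by
    rw [integral_eq_lintegral_of_nonneg_ae hQdnn hQdaem.aestronglyMeasurable]
  have B2 : ∫ ω, max (X' ω - d) 0 ∂μ =
      (∫⁻ ω, ENNReal.ofReal (max (X' ω - d) 0) ∂μ).toReal := by
    rw [integral_eq_lintegral_of_nonneg_ae hmaxnn hmaxaem.aestronglyMeasurable]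
  have hXeq : ∫ ω, max (X ω - d) 0 ∂μ = ∫ ω, max (X' ω - d) 0 ∂μ := by
    refine integral_congr_ae ?_
    filter_upwards [hXX'] with ω h
    rw [h]
  have E : ∫ q in Ioc p 1, (Q q - d) = ∫ ω, max (X ω - d) 0 ∂μ := by
    rw [B1, keyL, ← B2, hXeq]
  -- split the interval integral
  have hsplit : ∫ q in p..1, Q q = (∫ q in Ioc p 1, (Q q - d)) + (1 - p) * d := by
    have h1 : ∫ q in Ioc p 1, Q q =
        (∫ q in Ioc p 1, (Q q - d)) + ∫ _q in Ioc p 1, d := by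
      rw [← integral_add IQ (integrable_const d)]
      exact integral_congr_ae (ae_of_all _ fun q => by simp)
    rw [intervalIntegral.integral_of_le hp1.le, h1, setIntegral_const, measureReal_def, Real.volume_Ioc,
      ENNReal.toReal_ofReal (by linarith), smul_eq_mul]
  rw [hsplit, E]
  have hne : (1:ℝ) - p ≠ 0 := by linarith
  field_simp
  ring
end

section
/- For any integrable random variable X, any p ∈ (0,1) and any α ∈ [0,1], LTVaR_p[X] = F_X^{-1(α)}(p) - (1/p) · E[(F_X^{-1(α)}(p) - X)_+]. -/
open MeasureTheory Set Filter ProbabilityTheory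
open scoped Topology ENNReal

/-- `LTVaR_p[X] = F_X^{-1(α)}(p) - (1/p) E[(F_X^{-1(α)}(p) - X)_+]`. -/
theorem ltvar_eq_genquantile_sub_lowertail {Ω : Type*} [MeasurableSpace Ω] (μ : Measure Ω)
    [IsProbabilityMeasure μ] (X : Ω → ℝ) (hX : Integrable X μ)
    (p α : ℝ) (hp : p ∈ Set.Ioo (0:ℝ) 1) (hα : α ∈ Set.Icc (0:ℝ) 1)
    (F Q R : ℝ → ℝ)
    (hF : ∀ y, F y = (μ {ω | X ω ≤ y}).toReal)
    (hQ : ∀ q, Q q = sInf {x : ℝ | q ≤ F x})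
    (hR : ∀ q, R q = sSup {x : ℝ | F x ≤ q}) :
    (1 / p) * ∫ q in (0:ℝ)..p, Q q =
      ((1 - α) * Q p + α * R p) -
        (1 / p) * ∫ ω, max (((1 - α) * Q p + α * R p) - X ω) 0 ∂μ := by
  obtain ⟨hp0, hp1⟩ := hp
  obtain ⟨hα0, hα1⟩ := hα
  have hXm : AEMeasurable X μ := hX.1.aemeasurable
  set ρ : Measure ℝ := μ.map X with hρ
  have hρprob : IsProbabilityMeasure ρ := Measure.isProbabilityMeasure_map hXm
  have hFc : ∀ y, F y = cdf ρ y := by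
    intro y
    rw [hF, cdf_eq_real, measureReal_def]
    congr 1
    rw [hρ, Measure.map_apply_of_aemeasurable hXm measurableSet_Iic]
    rfl
  have hFeq : F = ⇑(cdf ρ) := funext hFc
  have hFmono : Monotone F := hFeq ▸ monotone_cdf ρ
  have hF0 : ∀ y, 0 ≤ F y := fun y => hFeq ▸ cdf_nonneg ρ y
  have hFtop : Tendsto F atTop (𝓝 1) := hFeq ▸ tendsto_cdf_atTop ρ
  have hFbot : Tendsto F atBot (𝓝 0) := hFeq ▸ tendsto_cdf_atBot ρ
  have hFright : ∀ y, Tendsto F (𝓝[≥] y) (𝓝 (F y)) := by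
    rw [hFeq]; exact fun y => (cdf ρ).right_continuous y
  have hFIic : ∀ y, ENNReal.ofReal (F y) = ρ (Iic y) := by
    intro y; rw [hFc]; exact ofReal_cdf ρ y
  -- lower bounds for the sets defining Q
  have hSbdd : ∀ q : ℝ, 0 < q → BddBelow {x : ℝ | q ≤ F x} := by
    intro q hq
    obtain ⟨M, hM⟩ := (hFbot.eventually (eventually_lt_nhds hq)).exists_forall_of_atBot
    exact ⟨M, fun x hx => le_of_not_gt fun hxM => absurd hx (not_le.2 (hM x hxM.le))⟩
  have hTne : {x : ℝ | F x ≤ p}.Nonempty := by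
    obtain ⟨M, hM⟩ := (hFbot.eventually (eventually_le_nhds hp0)).exists_forall_of_atBot
    exact ⟨M, hM M le_rfl⟩
  have hTbdd : BddAbove {x : ℝ | F x ≤ p} := by
    obtain ⟨M, hM⟩ := (hFtop.eventually (eventually_gt_nhds hp1)).exists_forall_of_atTop
    exact ⟨M, fun x hx => le_of_not_gt fun hxM => absurd hx (not_le.2 (hM x hxM.le))⟩
  have hSne : ∀ q : ℝ, q < 1 → {x : ℝ | q ≤ F x}.Nonempty := by
    intro q hq
    obtain ⟨x, hx⟩ := (hFtop.eventually (eventually_ge_nhds hq)).exists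
    exact ⟨x, hx⟩
  -- the Galois connection
  have hGal : ∀ q ∈ Set.Ioc (0:ℝ) p, ∀ y, (Q q ≤ y ↔ q ≤ F y) := by
    rintro q ⟨hq0, hqp⟩ y
    have hq1 : q < 1 := lt_of_le_of_lt hqp hp1
    constructor
    · intro h
      refine ge_of_tendsto ((hFright y).mono_left (nhdsWithin_mono y Ioi_subset_Ici_self)) ?_
      filter_upwards [self_mem_nhdsWithin] with x hx
      have : sInf {x : ℝ | q ≤ F x} < x := by rw [← hQ]; exact lt_of_le_of_lt h hx
      obtain ⟨s, hs, hsx⟩ := exists_lt_of_csInf_lt (hSne q hq1) this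
      exact le_trans hs (hFmono hsx.le)
    · intro h
      rw [hQ]
      exact csInf_le (hSbdd q hq0) h
  have hpIoc : p ∈ Set.Ioc (0:ℝ) p := ⟨hp0, le_rfl⟩
  have hFQp : p ≤ F (Q p) := (hGal p hpIoc (Q p)).1 le_rfl
  have hQRp : Q p ≤ R p := by
    by_contra hlt
    push_neg at hlt
    obtain ⟨x, hx1, hx2⟩ := exists_between hlt
    have hFx : F x ≤ p := by
      by_contra hgt
      exact absurd ((hGal p hpIoc x).2 (le_of_lt (not_le.1 hgt))) (not_le.2 hx2)
    have : x ≤ R p := by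
      rw [hR]; exact le_csSup hTbdd hFx
    exact absurd hx1 (not_lt.2 this)
  set c := (1 - α) * Q p + α * R p with hc
  have hQpc : Q p ≤ c := by nlinarith
  have hcR : c ≤ R p := by nlinarith
  have hQqc : ∀ q ∈ Set.Ioc (0:ℝ) p, Q q ≤ c := fun q hq =>
    (hGal q hq c).2 (hq.2.trans (hFQp.trans (hFmono hQpc)))
  have hFyp : ∀ y, y < c → F y ≤ p := by
    intro y hy
    have hyR : y < sSup {x : ℝ | F x ≤ p} := by rw [← hR]; exact lt_of_lt_of_le hy hcR
    obtain ⟨s, hs, hys⟩ := exists_lt_of_lt_csSup hTne hyR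
    exact (hFmono hys.le).trans hs
  have hFms : Measurable F := hFmono.measurable
  -- the common key quantity
  set K := ∫⁻ y in Set.Iio c, ENNReal.ofReal (F y) with hK
  have hTset1 : MeasurableSet {z : ℝ × ℝ | z.1 ≤ z.2} :=
    measurableSet_le measurable_fst measurable_snd
  have hTset2 : MeasurableSet {z : ℝ × ℝ | z.1 ≤ F z.2} :=
    measurableSet_le measurable_fst (hFms.comp measurable_snd)
  -- computation for X
  have comp1 : ∫⁻ x, ENNReal.ofReal (c - x) ∂ρ = K := by
    have hpt : ∀ x : ℝ, (∫⁻ y in Iio c,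
        Set.indicator {z : ℝ × ℝ | z.1 ≤ z.2} (1 : ℝ × ℝ → ℝ≥0∞) (x, y))
        = ENNReal.ofReal (c - x) := by
      intro x
      have h1 : (fun y => Set.indicator {z : ℝ × ℝ | z.1 ≤ z.2} (1 : ℝ × ℝ → ℝ≥0∞) (x, y))
          = (Ici x).indicator 1 := by
        funext y
        simp [Set.indicator_apply, Set.mem_Ici]
      rw [h1, lintegral_indicator_one measurableSet_Ici,
        Measure.restrict_apply measurableSet_Ici, Ici_inter_Iio, Real.volume_Ico]
    have hpt2 : ∀ y : ℝ, (∫⁻ x, Set.indicator {z : ℝ × ℝ | z.1 ≤ z.2}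
        (1 : ℝ × ℝ → ℝ≥0∞) (x, y) ∂ρ) = ENNReal.ofReal (F y) := by
      intro y
      have h1 : (fun x => Set.indicator {z : ℝ × ℝ | z.1 ≤ z.2} (1 : ℝ × ℝ → ℝ≥0∞) (x, y))
          = (Iic y).indicator 1 := by
        funext x
        simp [Set.indicator_apply, Set.mem_Iic]
      rw [h1, lintegral_indicator_one measurableSet_Iic, ← hFIic y]
    have hswap := lintegral_lintegral_swap (μ := ρ) (ν := volume.restrict (Iio c))
      (f := fun x y => Set.indicator {z : ℝ × ℝ | z.1 ≤ z.2} (1 : ℝ × ℝ → ℝ≥0∞) (x, y))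
      ((measurable_one.indicator hTset1).aemeasurable)
    calc ∫⁻ x, ENNReal.ofReal (c - x) ∂ρ
        = ∫⁻ x, (∫⁻ y in Iio c,
            Set.indicator {z : ℝ × ℝ | z.1 ≤ z.2} (1 : ℝ × ℝ → ℝ≥0∞) (x, y)) ∂ρ :=
          lintegral_congr fun x => (hpt x).symm
      _ = ∫⁻ y in Iio c, (∫⁻ x,
            Set.indicator {z : ℝ × ℝ | z.1 ≤ z.2} (1 : ℝ × ℝ → ℝ≥0∞) (x, y) ∂ρ) := by
          exact hswap
      _ = K := lintegral_congr fun y => hpt2 y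
  -- computation for Q
  have comp2 : ∫⁻ q in Set.Ioc (0:ℝ) p, ENNReal.ofReal (c - Q q) = K := by
    have hpt : ∀ q ∈ Set.Ioc (0:ℝ) p, (∫⁻ y in Iio c,
        Set.indicator {z : ℝ × ℝ | z.1 ≤ F z.2} (1 : ℝ × ℝ → ℝ≥0∞) (q, y))
        = ENNReal.ofReal (c - Q q) := by
      intro q hq
      have h1 : (fun y => Set.indicator {z : ℝ × ℝ | z.1 ≤ F z.2} (1 : ℝ × ℝ → ℝ≥0∞) (q, y))
          = {y : ℝ | q ≤ F y}.indicator 1 := by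
        funext y
        simp [Set.indicator_apply]
      have hmeas : MeasurableSet {y : ℝ | q ≤ F y} := hFms measurableSet_Ici
      have hset : {y : ℝ | q ≤ F y} ∩ Iio c = Ico (Q q) c := by
        ext y
        simp only [Set.mem_inter_iff, Set.mem_setOf_eq, Set.mem_Iio, Set.mem_Ico]
        exact and_congr_left fun _ => (hGal q hq y).symm
      rw [h1, lintegral_indicator_one hmeas, Measure.restrict_apply hmeas, hset,
        Real.volume_Ico]
    have hpt2 : ∀ y ∈ Iio c, (∫⁻ q in Set.Ioc (0:ℝ) p,
        Set.indicator {z : ℝ × ℝ | z.1 ≤ F z.2} (1 : ℝ × ℝ → ℝ≥0∞) (q, y))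
        = ENNReal.ofReal (F y) := by
      intro y hy
      have h1 : (fun q => Set.indicator {z : ℝ × ℝ | z.1 ≤ F z.2} (1 : ℝ × ℝ → ℝ≥0∞) (q, y))
          = (Iic (F y)).indicator 1 := by
        funext q
        simp [Set.indicator_apply, Set.mem_Iic]
      have hset : Iic (F y) ∩ Ioc (0:ℝ) p = Ioc 0 (F y) := by
        ext q
        simp only [Set.mem_inter_iff, Set.mem_Iic, Set.mem_Ioc]
        constructor
        · rintro ⟨h1, h2, _⟩; exact ⟨h2, h1⟩
        · rintro ⟨h1, h2⟩; exact ⟨h2, h1, h2.trans (hFyp y hy)⟩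
      rw [h1, lintegral_indicator_one measurableSet_Iic,
        Measure.restrict_apply measurableSet_Iic, hset, Real.volume_Ioc, sub_zero]
    have hswap := lintegral_lintegral_swap (μ := volume.restrict (Ioc (0:ℝ) p))
      (ν := volume.restrict (Iio c))
      (f := fun q y => Set.indicator {z : ℝ × ℝ | z.1 ≤ F z.2} (1 : ℝ × ℝ → ℝ≥0∞) (q, y))
      ((measurable_one.indicator hTset2).aemeasurable)
    calc ∫⁻ q in Set.Ioc (0:ℝ) p, ENNReal.ofReal (c - Q q)
        = ∫⁻ q in Set.Ioc (0:ℝ) p, (∫⁻ y in Iio c,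
            Set.indicator {z : ℝ × ℝ | z.1 ≤ F z.2} (1 : ℝ × ℝ → ℝ≥0∞) (q, y)) :=
          setLIntegral_congr_fun measurableSet_Ioc (fun q hq => (hpt q hq).symm)
      _ = ∫⁻ y in Iio c, (∫⁻ q in Set.Ioc (0:ℝ) p,
            Set.indicator {z : ℝ × ℝ | z.1 ≤ F z.2} (1 : ℝ × ℝ → ℝ≥0∞) (q, y)) := by
          exact hswap
      _ = K := setLIntegral_congr_fun measurableSet_Iio (fun y hy => hpt2 y hy)
  -- finiteness
  have hintρ : Integrable (fun x => c - x) ρ := by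
    rw [hρ]
    refine (integrable_map_measure ?_ hXm).2 ((integrable_const c).sub hX)
    exact (measurable_id.const_sub c).aestronglyMeasurable
  have Kfin : K ≠ ∞ := by
    rw [← comp1]
    exact hintρ.lintegral_lt_top.ne
  -- the expected shortfall side
  have hmax_eq : ∀ ω, ENNReal.ofReal (max (c - X ω) 0) = ENNReal.ofReal (c - X ω) := by
    intro ω
    rcases le_total (c - X ω) 0 with h | h
    · rw [max_eq_right h, ENNReal.ofReal_of_nonpos h, ENNReal.ofReal_zero]
    · rw [max_eq_left h]
  have hBmeas : AEStronglyMeasurable (fun ω => max (c - X ω) 0) μ :=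
    ((aemeasurable_const.sub hXm).max aemeasurable_const).aestronglyMeasurable
  have hBnn : 0 ≤ᵐ[μ] fun ω => max (c - X ω) 0 :=
    ae_of_all _ fun ω => le_max_right _ _
  have hB : ∫ ω, max (c - X ω) 0 ∂μ = K.toReal := by
    rw [integral_eq_lintegral_of_nonneg_ae hBnn hBmeas]
    congr 1
    simp_rw [hmax_eq]
    rw [← comp1, hρ]
    exact (lintegral_map' ((measurable_id.const_sub c).ennreal_ofReal).aemeasurable hXm).symm
  -- integrability of Q
  have hQmonoOn : MonotoneOn Q (Set.Ioc (0:ℝ) p) := fun a ha b hb hab =>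
    (hGal a ha (Q b)).2 (hab.trans ((hGal b hb (Q b)).1 le_rfl))
  have hQaem : AEMeasurable Q (volume.restrict (Set.Ioc (0:ℝ) p)) :=
    aemeasurable_restrict_of_monotoneOn measurableSet_Ioc hQmonoOn
  have hsub_aem : AEMeasurable (fun q => c - Q q) (volume.restrict (Set.Ioc (0:ℝ) p)) :=
    aemeasurable_const.sub hQaem
  have hnn : 0 ≤ᵐ[volume.restrict (Set.Ioc (0:ℝ) p)] fun q => c - Q q := by
    filter_upwards [ae_restrict_mem measurableSet_Ioc] with q hq
    exact sub_nonneg.2 (hQqc q hq)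
  have hInt : IntegrableOn (fun q => c - Q q) (Set.Ioc (0:ℝ) p) volume := by
    refine ⟨hsub_aem.aestronglyMeasurable, ?_⟩
    rw [hasFiniteIntegral_iff_ofReal hnn, comp2]
    exact Kfin.lt_top
  have hQint : IntegrableOn Q (Set.Ioc (0:ℝ) p) volume := by
    have h := (integrableOn_const (C := c) measure_Ioc_lt_top.ne).sub hInt
    have h2 : ((fun _ : ℝ => c) - fun q => c - Q q) = Q := by
      funext q; simp
    exact h2 ▸ h
  have hA : ∫ q in Set.Ioc (0:ℝ) p, (c - Q q) = K.toReal := by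
    rw [integral_eq_lintegral_of_nonneg_ae hnn hsub_aem.aestronglyMeasurable, comp2]
  have hA2 : ∫ q in Set.Ioc (0:ℝ) p, (c - Q q)
      = c * p - ∫ q in Set.Ioc (0:ℝ) p, Q q := by
    rw [integral_sub (integrableOn_const (C := c) measure_Ioc_lt_top.ne) hQint]
    congr 1
    rw [setIntegral_const, measureReal_def, Real.volume_Ioc, sub_zero, ENNReal.toReal_ofReal hp0.le,
      smul_eq_mul, mul_comm]
  have hQval : ∫ q in Set.Ioc (0:ℝ) p, Q q = c * p - K.toReal := by
    have h := hA2
    rw [hA] at h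
    linarith
  rw [intervalIntegral.integral_of_le hp0.le, hQval, hB]
  field_simp
end

section
/- Let X be integrable, p ∈ (0,1), and suppose the cdf F_X is continuous at F_X^{-1}(p) (equivalently F_X(F_X^{-1}(p)) = p and P(X = F_X^{-1}(p)) = 0). Then TVaR_p[X] = (1/(1-p)) · E[X · 1{X ≥ F_X^{-1}(p)}]. -/
open MeasureTheory

open Set Filter ProbabilityTheory in
/-- If the cdf `F` of an integrable `X` is continuous at `F⁻¹(p)`, then
`TVaR_p[X] = (1/(1-p)) E[X · 1{X ≥ F⁻¹(p)}]`. -/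
theorem tvar_eq_conditional_tail_expectation {Ω : Type*} [MeasurableSpace Ω]
    (μ : Measure Ω) [IsProbabilityMeasure μ]
    (X : Ω → ℝ) (hX : Integrable X μ)
    (p : ℝ) (hp : p ∈ Set.Ioo (0:ℝ) 1)
    (F Q : ℝ → ℝ)
    (hF : ∀ y, F y = (μ {ω | X ω ≤ y}).toReal)
    (hQ : ∀ q, Q q = sInf {x : ℝ | q ≤ F x})
    (hcont : ContinuousAt F (Q p)) :
    (1 / (1 - p)) * ∫ q in p..1, Q q =
      (1 / (1 - p)) * ∫ ω in {ω | Q p ≤ X ω}, X ω ∂μ := by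
  have hXm : AEMeasurable X μ := hX.aemeasurable
  set ν : Measure ℝ := μ.map X with hν
  haveI : IsProbabilityMeasure ν := Measure.isProbabilityMeasure_map hXm
  have hFc : F = cdf ν := by
    funext y
    rw [hF, cdf_eq_real, measureReal_def, hν, Measure.map_apply_of_aemeasurable hXm measurableSet_Iic]
    rfl
  have hFmono : Monotone F := hFc ▸ monotone_cdf ν
  have hF1 : ∀ x, F x ≤ 1 := fun x => hFc ▸ cdf_le_one ν x
  -- the set in the definition of Q is nonempty and bounded below for q ∈ (0,1)
  have hne : ∀ q : ℝ, q < 1 → {x : ℝ | q ≤ F x}.Nonempty := by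
    intro q hq
    obtain ⟨x, hx⟩ := ((hFc ▸ tendsto_cdf_atTop ν :
      Tendsto F atTop (nhds 1)).eventually_const_lt hq).exists
    exact ⟨x, hx.le⟩
  have hbdd : ∀ q : ℝ, 0 < q → BddBelow {x : ℝ | q ≤ F x} := by
    intro q hq
    obtain ⟨x0, hx0⟩ := eventually_atBot.1 ((hFc ▸ tendsto_cdf_atBot ν :
      Tendsto F atBot (nhds 0)).eventually_lt_const hq)
    refine ⟨x0, fun s hs => ?_⟩
    by_contra hcon
    exact absurd hs (not_le.2 (hx0 s (le_of_not_ge hcon)))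
  -- key: q ≤ F (Q q) for q ∈ (0,1), by right continuity of F
  have hkey : ∀ q ∈ Ioo (0:ℝ) 1, q ≤ F (Q q) := by
    intro q hq
    have h1 : ∀ x, Q q < x → q ≤ F x := by
      intro x hx
      rw [hQ] at hx
      obtain ⟨s, hs, hsx⟩ := (csInf_lt_iff (hbdd q hq.1) (hne q hq.2)).1 hx
      exact le_trans hs (hFmono hsx.le)
    have h2 : Tendsto F (nhdsWithin (Q q) (Ioi (Q q))) (nhds (F (Q q))) := by
      have := hFc ▸ (cdf ν).right_continuous (Q q)
      exact this.tendsto.mono_left (nhdsWithin_mono _ Ioi_subset_Ici_self)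
    exact ge_of_tendsto h2 (eventually_nhdsWithin_of_forall fun x hx => h1 x hx)
  -- Galois connection
  have hgalois : ∀ q ∈ Ioo (0:ℝ) 1, ∀ x : ℝ, Q q ≤ x ↔ q ≤ F x := by
    intro q hq x
    constructor
    · intro h
      exact le_trans (hkey q hq) (hFmono h)
    · intro h
      rw [hQ]
      exact csInf_le (hbdd q hq.1) h
  -- Q is monotone on (0,1)
  have hQmono : MonotoneOn Q (Ioo (0:ℝ) 1) := by
    intro q1 hq1 q2 hq2 h
    rw [hQ, hQ]
    exact csInf_le_csInf (hbdd q1 hq1.1) (hne q2 hq2.2)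
      (fun x hx => le_trans h hx)
  set lam : Measure ℝ := volume.restrict (Ioo (0:ℝ) 1) with hlam
  have hQaem : AEMeasurable Q lam :=
    aemeasurable_restrict_of_monotoneOn measurableSet_Ioo hQmono
  have hlamapp : ∀ s : Set ℝ, MeasurableSet s →
      lam (Q ⁻¹' s) = volume (Q ⁻¹' s ∩ Ioo 0 1) := by
    intro s hs
    exact Measure.restrict_apply₀ (hQaem.nullMeasurable hs)
  haveI : IsFiniteMeasure (Measure.map Q lam) := by
    constructor
    rw [Measure.map_apply_of_aemeasurable hQaem MeasurableSet.univ]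
    simp [hlam]
  -- the quantile transform pushes Lebesgue on (0,1) to ν
  have hmap : Measure.map Q lam = ν := by
    refine Measure.ext_of_Iic _ _ (fun x => ?_)
    rw [Measure.map_apply_of_aemeasurable hQaem measurableSet_Iic,
      hlamapp _ measurableSet_Iic]
    have hset : Q ⁻¹' Iic x ∩ Ioo 0 1 = Iic (F x) ∩ Ioo 0 1 := by
      ext q
      simp only [mem_inter_iff, mem_preimage, mem_Iic, and_congr_left_iff]
      intro hq
      exact hgalois q hq x
    rw [hset, ← (ofReal_cdf ν x : ENNReal.ofReal (cdf ν x) = ν (Iic x)), ← hFc]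
    rcases lt_or_eq_of_le (hF1 x) with h | h
    · have : Iic (F x) ∩ Ioo 0 1 = Ioc 0 (F x) := by
        ext q
        simp only [mem_inter_iff, mem_Iic, mem_Ioo, mem_Ioc]
        constructor
        · rintro ⟨h1, h2, h3⟩; exact ⟨h2, h1⟩
        · rintro ⟨h1, h2⟩; exact ⟨h2, h1, lt_of_le_of_lt h2 h⟩
      rw [this, Real.volume_Ioc, sub_zero]
    · have : Iic (F x) ∩ Ioo 0 1 = Ioo 0 1 := by
        rw [inter_eq_right]
        intro q hq
        exact le_trans hq.2.le (h ▸ le_refl _)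
      rw [this, Real.volume_Ioo, sub_zero, h]
  -- ν has no atom at Q p
  have hatom : ν {Q p} = 0 := by
    have hL : Function.leftLim F (Q p) = F (Q p) :=
      leftLim_eq_of_tendsto
        (hcont.tendsto.mono_left nhdsWithin_le_nhds)
    have hs := (cdf ν).measure_singleton (Q p)
    rw [measure_cdf] at hs
    rw [hs, ← hFc, hL, sub_self, ENNReal.ofReal_zero]
  -- the bad set is null
  have hbad : volume ({p} ∪ {(1:ℝ)} ∪ (Q ⁻¹' {Q p} ∩ Ioo 0 1)) = 0 := by
    have h3 : volume (Q ⁻¹' {Q p} ∩ Ioo 0 1) = 0 := by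
      rw [← hlamapp _ (measurableSet_singleton _),
        ← Measure.map_apply_of_aemeasurable hQaem (measurableSet_singleton _), hmap]
      exact hatom
    refine measure_union_null (measure_union_null ?_ ?_) h3 <;> simp
  set m : ℝ := Q p with hm
  set g : ℝ → ℝ := (Ici m).indicator id with hg
  have hgm : AEStronglyMeasurable g (Measure.map Q lam) :=
    ((measurable_id.indicator measurableSet_Ici)).aestronglyMeasurable
  -- pointwise equality off the bad set
  have hptwise : ∀ q, q ∉ ({p} ∪ {(1:ℝ)} ∪ (Q ⁻¹' {m} ∩ Ioo 0 1)) →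
      (Ioc p 1).indicator Q q = (Ioo 0 1).indicator (fun q => g (Q q)) q := by
    intro q hqnot
    simp only [mem_union, mem_singleton_iff, mem_inter_iff, mem_preimage, not_or] at hqnot
    obtain ⟨⟨hqp, hq1⟩, hq3⟩ := hqnot
    by_cases hq01 : q ∈ Ioo (0:ℝ) 1
    · by_cases hqgt : p < q
      · have hmem : q ∈ Ioc p 1 := ⟨hqgt, hq01.2.le⟩
        rw [indicator_of_mem hmem, indicator_of_mem hq01]
        have hle : m ≤ Q q := hQmono hp hq01 hqgt.le
        rw [hg, indicator_of_mem (mem_Ici.2 hle) id]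
        rfl
      · have hQlt : Q q < m := by
          refine lt_of_le_of_ne (hQmono hq01 hp (le_of_not_gt hqgt)) ?_
          intro hEq
          exact hq3 ⟨hEq, hq01⟩
        rw [indicator_of_notMem (fun h => hqgt h.1), indicator_of_mem hq01,
          hg, indicator_of_notMem (fun h => absurd (mem_Ici.1 h) (not_le.2 hQlt)) id]
    · rw [indicator_of_notMem hq01]
      refine indicator_of_notMem (fun h => hq01 ?_) Q
      exact ⟨lt_trans hp.1 h.1, lt_of_le_of_ne h.2 hq1⟩
  have hae : (Ioc p 1).indicator Q =ᵐ[volume] (Ioo 0 1).indicator (fun q => g (Q q)) := by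
    refine measure_mono_null (fun q hq => ?_) hbad
    by_contra hbadq
    exact hq (hptwise q hbadq)
  have key : ∫ q in p..1, Q q = ∫ ω in {ω | Q p ≤ X ω}, X ω ∂μ := by
    rw [intervalIntegral.integral_of_le hp.2.le]
    calc ∫ q in Ioc p 1, Q q
        = ∫ q, (Ioc p 1).indicator Q q := (integral_indicator measurableSet_Ioc).symm
      _ = ∫ q, (Ioo 0 1).indicator (fun q => g (Q q)) q := integral_congr_ae hae
      _ = ∫ q, g (Q q) ∂lam := by
          rw [hlam]; exact integral_indicator measurableSet_Ioo
      _ = ∫ x, g x ∂ν := by rw [← hmap]; exact (integral_map hQaem hgm).symm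
      _ = ∫ x in Ici m, x ∂ν := by
          rw [hg]; exact integral_indicator measurableSet_Ici
      _ = ∫ ω in X ⁻¹' Ici m, X ω ∂μ := by
          rw [hν]; exact setIntegral_map measurableSet_Ici aestronglyMeasurable_id hXm
      _ = ∫ ω in {ω | Q p ≤ X ω}, X ω ∂μ := rfl
  rw [key]
end

section
/- Let S^l = F_{X_1}^{-1}(U) + F_{X_2}^{-1}(1-U) with U uniform on (0,1), and suppose g(u) = F_{X_1}^{-1}(u) + F_{X_2}^{-1}(1-u) is nondecreasing on (0,1). Then for every p ∈ (0,1) at which F_{S^l}^{-1} is strictly increasing (i.e. F_{S^l} is continuous at F_{S^l}^{-1}(p)), TVaR_p[S^l] = TVaR_p[X_1] + LTVaR_{1-p}[X_2]. -/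
open MeasureTheory Set Filter Topology

section Aux

variable {Ω : Type*} [MeasurableSpace Ω] (μ : Measure Ω) [IsProbabilityMeasure μ]
  (X : Ω → ℝ) (F Q : ℝ → ℝ)

lemma aux_cdf_mono (hF : ∀ y, F y = (μ {ω | X ω ≤ y}).toReal) : Monotone F := by
  intro a b hab
  rw [hF, hF]
  exact ENNReal.toReal_mono (measure_ne_top μ _)
    (measure_mono fun ω h => le_trans h hab)

lemma aux_cdf_tendsto (hX : Measurable X)
    (hF : ∀ y, F y = (μ {ω | X ω ≤ y}).toReal) (c : ℝ) :
    Tendsto (fun n : ℕ => F (c + 1 / (n + 1))) atTop (𝓝 (F c)) := by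
  have h2 : (⋂ n : ℕ, {ω | X ω ≤ c + 1 / (n + 1)}) = {ω | X ω ≤ c} := by
    ext ω
    simp only [mem_iInter, mem_setOf_eq]
    constructor
    · intro h
      by_contra hlt
      push_neg at hlt
      obtain ⟨n, hn⟩ := exists_nat_one_div_lt (sub_pos.2 hlt)
      have := h n
      linarith
    · intro h n
      have h0 : (0:ℝ) < 1 / (n + 1) := by positivity
      linarith
  have h1 : Tendsto (fun n : ℕ => μ {ω | X ω ≤ c + 1 / (n + 1)}) atTop
      (𝓝 (μ {ω | X ω ≤ c})) := by
    have hmeas : ∀ n : ℕ, NullMeasurableSet {ω | X ω ≤ c + 1 / (n + 1)} μ :=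
      fun n => (hX measurableSet_Iic).nullMeasurableSet
    have hanti : Antitone (fun n : ℕ => {ω | X ω ≤ c + 1 / (n + 1)}) := by
      intro n m hnm ω hω
      have h1 : (1:ℝ) / (m + 1) ≤ 1 / (n + 1) := by
        apply one_div_le_one_div_of_le (by positivity)
        exact_mod_cast add_le_add_left (Nat.cast_le.2 hnm) 1
      have hω' : X ω ≤ c + 1 / (m + 1) := hω
      show X ω ≤ c + 1 / (n + 1)
      linarith
    have := tendsto_measure_iInter_atTop (μ := μ) hmeas hanti ⟨0, measure_ne_top μ _⟩
    rwa [h2] at this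
  have := (ENNReal.tendsto_toReal (measure_ne_top μ {ω | X ω ≤ c})).comp h1
  simp only [Function.comp_def] at this
  simpa only [hF] using this

lemma aux_exists_ge (hX : Measurable X)
    (hF : ∀ y, F y = (μ {ω | X ω ≤ y}).toReal) {p : ℝ} (hp : p < 1) :
    ∃ b : ℝ, p ≤ F b := by
  have h2 : (⋃ n : ℕ, {ω | X ω ≤ (n:ℝ)}) = univ := by
    ext ω
    simp only [mem_iUnion, mem_setOf_eq, mem_univ, iff_true]
    exact exists_nat_ge (X ω)
  have h1 : Tendsto (fun n : ℕ => μ {ω | X ω ≤ (n:ℝ)}) atTop (𝓝 1) := by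
    have hmono : Monotone (fun n : ℕ => {ω | X ω ≤ (n:ℝ)}) := by
      intro n m hnm ω hω
      have hω' : X ω ≤ (n:ℝ) := hω
      show X ω ≤ (m:ℝ)
      exact le_trans hω' (by exact_mod_cast hnm)
    have := tendsto_measure_iUnion_atTop (μ := μ) hmono
    rwa [h2, measure_univ] at this
  have h3 : Tendsto (fun n : ℕ => F (n:ℝ)) atTop (𝓝 1) := by
    have := (ENNReal.tendsto_toReal (ENNReal.one_ne_top)).comp h1
    simp only [Function.comp_def, ENNReal.toReal_one] at this
    simpa only [hF] using this
  obtain ⟨n, hn⟩ := ((tendsto_order.1 h3).1 p hp).exists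
  exact ⟨n, hn.le⟩

lemma aux_exists_lt (hX : Measurable X)
    (hF : ∀ y, F y = (μ {ω | X ω ≤ y}).toReal) {p : ℝ} (hp : 0 < p) :
    ∃ a : ℝ, F a < p := by
  have h2 : (⋂ n : ℕ, {ω | X ω ≤ -(n:ℝ)}) = (∅ : Set Ω) := by
    ext ω
    simp only [mem_iInter, mem_setOf_eq, mem_empty_iff_false, iff_false, not_forall]
    obtain ⟨n, hn⟩ := exists_nat_gt (-(X ω))
    exact ⟨n, by push_neg; linarith⟩
  have h1 : Tendsto (fun n : ℕ => μ {ω | X ω ≤ -(n:ℝ)}) atTop (𝓝 0) := by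
    have hmeas : ∀ n : ℕ, NullMeasurableSet {ω | X ω ≤ -(n:ℝ)} μ :=
      fun n => (hX measurableSet_Iic).nullMeasurableSet
    have hanti : Antitone (fun n : ℕ => {ω | X ω ≤ -(n:ℝ)}) := by
      intro n m hnm ω hω
      have hω' : X ω ≤ -(m:ℝ) := hω
      show X ω ≤ -(n:ℝ)
      refine le_trans hω' (neg_le_neg ?_)
      exact_mod_cast hnm
    have := tendsto_measure_iInter_atTop (μ := μ)
      (s := fun n : ℕ => {ω | X ω ≤ -(n:ℝ)}) hmeas hanti ⟨0, measure_ne_top μ _⟩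
    rwa [h2, measure_empty] at this
  have h3 : Tendsto (fun n : ℕ => F (-(n:ℝ))) atTop (𝓝 0) := by
    have := (ENNReal.tendsto_toReal (by simp : (0:ENNReal) ≠ ⊤)).comp h1
    simp only [Function.comp_def, ENNReal.toReal_zero] at this
    simpa only [hF] using this
  obtain ⟨n, hn⟩ := ((tendsto_order.1 h3).2 p hp).exists
  exact ⟨-(n:ℝ), hn⟩

lemma aux_gal (hX : Measurable X)
    (hF : ∀ y, F y = (μ {ω | X ω ≤ y}).toReal)
    (hQ : ∀ p, Q p = sInf {x : ℝ | p ≤ F x})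
    {p : ℝ} (hp : p ∈ Ioo (0:ℝ) 1) (x : ℝ) : Q p ≤ x ↔ p ≤ F x := by
  obtain ⟨b, hb⟩ := aux_exists_ge μ X F hX hF hp.2
  obtain ⟨a, ha⟩ := aux_exists_lt μ X F hX hF hp.1
  have hmono := aux_cdf_mono μ X F hF
  have hne : {x : ℝ | p ≤ F x}.Nonempty := ⟨b, hb⟩
  have hbdd : BddBelow {x : ℝ | p ≤ F x} := by
    refine ⟨a, fun y hy => ?_⟩
    by_contra hya
    push_neg at hya
    exact absurd (le_trans hy (hmono hya.le)) (not_le.2 ha)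
  constructor
  · intro h
    have key : p ≤ F (sInf {x : ℝ | p ≤ F x}) := by
      refine ge_of_tendsto (aux_cdf_tendsto μ X F hX hF _) (Eventually.of_forall fun n => ?_)
      obtain ⟨s, hs, hs2⟩ := exists_lt_of_csInf_lt hne
        (lt_add_of_pos_right _ (by positivity : (0:ℝ) < 1 / (n + 1)))
      exact le_trans hs (hmono hs2.le)
    refine le_trans key (hmono ?_)
    rwa [hQ] at h
  · intro h
    rw [hQ]
    exact csInf_le hbdd h

lemma aux_map (hX : Measurable X)
    (hF : ∀ y, F y = (μ {ω | X ω ≤ y}).toReal)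
    (hQ : ∀ p, Q p = sInf {x : ℝ | p ≤ F x}) :
    AEMeasurable Q (volume.restrict (Ioo (0:ℝ) 1)) ∧
      Measure.map Q (volume.restrict (Ioo (0:ℝ) 1)) = Measure.map X μ := by
  have hF0 : ∀ t, 0 ≤ F t := fun t => by rw [hF]; exact ENNReal.toReal_nonneg
  have hF1 : ∀ t, F t ≤ 1 := fun t => by
    rw [hF]
    calc (μ {ω | X ω ≤ t}).toReal ≤ (μ univ).toReal :=
          ENNReal.toReal_mono (measure_ne_top μ _) (measure_mono (subset_univ _))
      _ = 1 := by simp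
  set Q' := (Ioo (0:ℝ) 1).indicator Q with hQ'def
  have hkey : ∀ t, Ioo (0:ℝ) 1 ∩ {q | Q q ≤ t} = Ioo (0:ℝ) 1 ∩ Iic (F t) := by
    intro t
    ext q
    simp only [mem_inter_iff, mem_setOf_eq, mem_Iic, and_congr_right_iff]
    intro hq
    exact aux_gal μ X F Q hX hF hQ hq t
  have hmeasQ' : Measurable Q' := by
    apply measurable_of_Iic
    intro t
    by_cases ht : (0:ℝ) ≤ t
    · have : Q' ⁻¹' Iic t = (Ioo (0:ℝ) 1 ∩ Iic (F t)) ∪ (Ioo (0:ℝ) 1)ᶜ := by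
        ext q
        by_cases hq : q ∈ Ioo (0:ℝ) 1
        · simp only [mem_preimage, mem_Iic, hQ'def, indicator_of_mem hq, mem_union,
            mem_inter_iff, mem_compl_iff, hq, not_true_eq_false, or_false, true_and]
          exact aux_gal μ X F Q hX hF hQ hq t
        · simp only [mem_preimage, mem_Iic, hQ'def, indicator_of_notMem hq, mem_union,
            mem_inter_iff, mem_compl_iff, hq, not_false_eq_true, or_true, iff_true]
          exact ht
      rw [this]
      exact (measurableSet_Ioo.inter measurableSet_Iic).union measurableSet_Ioo.compl
    · have : Q' ⁻¹' Iic t = Ioo (0:ℝ) 1 ∩ Iic (F t) := by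
        ext q
        by_cases hq : q ∈ Ioo (0:ℝ) 1
        · simp only [mem_preimage, mem_Iic, hQ'def, indicator_of_mem hq, mem_inter_iff, hq,
            true_and]
          exact aux_gal μ X F Q hX hF hQ hq t
        · simp only [mem_preimage, mem_Iic, hQ'def, indicator_of_notMem hq, mem_inter_iff, hq,
            false_and, iff_false, not_le]
          push_neg at ht
          exact ht
      rw [this]
      exact measurableSet_Ioo.inter measurableSet_Iic
  have hae : Q' =ᵐ[volume.restrict (Ioo (0:ℝ) 1)] Q := by
    filter_upwards [ae_restrict_mem measurableSet_Ioo] with q hq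
    exact indicator_of_mem hq Q
  have hQae : AEMeasurable Q (volume.restrict (Ioo (0:ℝ) 1)) :=
    hmeasQ'.aemeasurable.congr hae
  refine ⟨hQae, ?_⟩
  haveI : IsProbabilityMeasure (volume.restrict (Ioo (0:ℝ) 1)) :=
    ⟨by rw [Measure.restrict_apply_univ, Real.volume_Ioo]; norm_num⟩
  haveI : IsProbabilityMeasure (Measure.map Q (volume.restrict (Ioo (0:ℝ) 1))) :=
    Measure.isProbabilityMeasure_map hQae
  haveI : IsProbabilityMeasure (Measure.map X μ) :=
    Measure.isProbabilityMeasure_map hX.aemeasurable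
  refine Measure.ext_of_Iic _ _ fun t => ?_
  rw [Measure.map_apply_of_aemeasurable hQae measurableSet_Iic,
    Measure.map_apply hX measurableSet_Iic]
  have e1 : (volume.restrict (Ioo (0:ℝ) 1)) (Q ⁻¹' Iic t) = volume (Ioo (0:ℝ) 1 ∩ Iic (F t)) := by
    rw [Measure.restrict_apply' measurableSet_Ioo]
    have : Q ⁻¹' Iic t ∩ Ioo (0:ℝ) 1 = Ioo (0:ℝ) 1 ∩ Iic (F t) := by
      rw [← hkey t]
      ext q
      simp only [mem_inter_iff, mem_preimage, mem_Iic, mem_setOf_eq]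
      tauto
    rw [this]
  have e2 : volume (Ioo (0:ℝ) 1 ∩ Iic (F t)) = ENNReal.ofReal (F t) := by
    apply le_antisymm
    · have hsub : Ioo (0:ℝ) 1 ∩ Iic (F t) ⊆ Ioc (0:ℝ) (F t) :=
        fun z hz => ⟨hz.1.1, hz.2⟩
      calc volume (Ioo (0:ℝ) 1 ∩ Iic (F t)) ≤ volume (Ioc (0:ℝ) (F t)) := measure_mono hsub
        _ = ENNReal.ofReal (F t) := by rw [Real.volume_Ioc, sub_zero]
    · have hsub : Ioo (0:ℝ) (F t) ⊆ Ioo (0:ℝ) 1 ∩ Iic (F t) := by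
        intro z hz
        exact ⟨⟨hz.1, lt_of_lt_of_le hz.2 (hF1 t)⟩, hz.2.le⟩
      calc ENNReal.ofReal (F t) = volume (Ioo (0:ℝ) (F t)) := by
            rw [Real.volume_Ioo, sub_zero]
        _ ≤ volume (Ioo (0:ℝ) 1 ∩ Iic (F t)) := measure_mono hsub
  have e3 : μ (X ⁻¹' Iic t) = ENNReal.ofReal (F t) := by
    have : X ⁻¹' Iic t = {ω | X ω ≤ t} := rfl
    rw [this, hF, ENNReal.ofReal_toReal (measure_ne_top μ _)]
  rw [e1, e2, e3]

lemma aux_integrable (hX : Measurable X) (hXi : Integrable X μ)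
    (hF : ∀ y, F y = (μ {ω | X ω ≤ y}).toReal)
    (hQ : ∀ p, Q p = sInf {x : ℝ | p ≤ F x}) :
    Integrable Q (volume.restrict (Ioo (0:ℝ) 1)) := by
  obtain ⟨hQae, hmap⟩ := aux_map μ X F Q hX hF hQ
  have h1 : Integrable id (Measure.map X μ) := by
    rw [integrable_map_measure aestronglyMeasurable_id hX.aemeasurable]
    exact hXi
  rw [← hmap, integrable_map_measure aestronglyMeasurable_id hQae] at h1
  exact h1

end Aux

/-- If `g` is nondecreasing on `(0,1)` and `F_{Sˡ}` is continuous at `F_{Sˡ}⁻¹(p)`, then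
`TVaR_p[Sˡ] = TVaR_p[X₁] + LTVaR_{1-p}[X₂]`. -/
theorem tvar_countermonotonic_monotone_case {Ω₁ Ω₂ : Type*}
    [MeasurableSpace Ω₁] [MeasurableSpace Ω₂]
    (μ₁ : Measure Ω₁) (μ₂ : Measure Ω₂)
    [IsProbabilityMeasure μ₁] [IsProbabilityMeasure μ₂]
    (X₁ : Ω₁ → ℝ) (hX₁ : Integrable X₁ μ₁)
    (X₂ : Ω₂ → ℝ) (hX₂ : Integrable X₂ μ₂)
    (F₁ F₂ Q₁ Q₂ : ℝ → ℝ)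
    (hF₁ : ∀ y, F₁ y = (μ₁ {ω | X₁ ω ≤ y}).toReal)
    (hF₂ : ∀ y, F₂ y = (μ₂ {ω | X₂ ω ≤ y}).toReal)
    (hQ₁ : ∀ p, Q₁ p = sInf {x : ℝ | p ≤ F₁ x})
    (hQ₂ : ∀ p, Q₂ p = sInf {x : ℝ | p ≤ F₂ x})
    (g : ℝ → ℝ) (hg : ∀ u, g u = Q₁ u + Q₂ (1 - u))
    (hmono : MonotoneOn g (Set.Ioo (0:ℝ) 1))
    (FS QS : ℝ → ℝ)
    (hFS : ∀ y, FS y =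
      ((Measure.map g (volume.restrict (Set.Ioo (0:ℝ) 1))) (Set.Iic y)).toReal)
    (hQS : ∀ q, QS q = sInf {x : ℝ | q ≤ FS x})
    (p : ℝ) (hp : p ∈ Set.Ioo (0:ℝ) 1)
    (hcont : ContinuousAt FS (QS p)) :
    (1 / (1 - p)) * ∫ q in p..1, QS q =
      (1 / (1 - p)) * ∫ q in p..1, Q₁ q +
        (1 / (1 - p)) * ∫ q in (0:ℝ)..(1 - p), Q₂ q := by
  obtain ⟨hp0, hp1⟩ := hp
  haveI hprob : IsProbabilityMeasure (volume.restrict (Ioo (0:ℝ) 1)) :=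
    ⟨by rw [Measure.restrict_apply_univ, Real.volume_Ioo]; norm_num⟩
  -- measurable representatives of X₁, X₂
  have hX₁m : AEMeasurable X₁ μ₁ := hX₁.aemeasurable
  have hX₂m : AEMeasurable X₂ μ₂ := hX₂.aemeasurable
  have hF₁' : ∀ y, F₁ y = (μ₁ {ω | hX₁m.mk X₁ ω ≤ y}).toReal := by
    intro y
    rw [hF₁]
    congr 1
    apply measure_congr
    refine eventuallyEq_set.2 ?_
    filter_upwards [hX₁m.ae_eq_mk] with ω hω
    simp [mem_setOf_eq, hω]
  have hF₂' : ∀ y, F₂ y = (μ₂ {ω | hX₂m.mk X₂ ω ≤ y}).toReal := by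
    intro y
    rw [hF₂]
    congr 1
    apply measure_congr
    refine eventuallyEq_set.2 ?_
    filter_upwards [hX₂m.ae_eq_mk] with ω hω
    simp [mem_setOf_eq, hω]
  have int₁ : Integrable Q₁ (volume.restrict (Ioo (0:ℝ) 1)) :=
    aux_integrable μ₁ (hX₁m.mk X₁) F₁ Q₁ hX₁m.measurable_mk
      (hX₁.congr hX₁m.ae_eq_mk) hF₁' hQ₁
  have int₂ : Integrable Q₂ (volume.restrict (Ioo (0:ℝ) 1)) :=
    aux_integrable μ₂ (hX₂m.mk X₂) F₂ Q₂ hX₂m.measurable_mk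
      (hX₂.congr hX₂m.ae_eq_mk) hF₂' hQ₂
  have hQ₁ae : AEMeasurable Q₁ (volume.restrict (Ioo (0:ℝ) 1)) :=
    (aux_map μ₁ (hX₁m.mk X₁) F₁ Q₁ hX₁m.measurable_mk hF₁' hQ₁).1
  have hQ₂ae : AEMeasurable Q₂ (volume.restrict (Ioo (0:ℝ) 1)) :=
    (aux_map μ₂ (hX₂m.mk X₂) F₂ Q₂ hX₂m.measurable_mk hF₂' hQ₂).1
  -- the reflection map
  have hτ : MeasurePreserving (fun x : ℝ => 1 - x) volume volume :=
    Measure.measurePreserving_sub_left volume 1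
  have hτρ : MeasurePreserving (fun x : ℝ => 1 - x)
      (volume.restrict (Ioo (0:ℝ) 1)) (volume.restrict (Ioo (0:ℝ) 1)) := by
    refine ⟨hτ.measurable, ?_⟩
    have hpre : (fun x : ℝ => 1 - x) ⁻¹' Ioo (0:ℝ) 1 = Ioo (0:ℝ) 1 := by
      ext x
      simp only [mem_preimage, mem_Ioo]
      constructor <;> (rintro ⟨h1, h2⟩; constructor <;> linarith)
    calc Measure.map (fun x : ℝ => 1 - x) (volume.restrict (Ioo (0:ℝ) 1))
        = Measure.map (fun x : ℝ => 1 - x)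
            (volume.restrict ((fun x : ℝ => 1 - x) ⁻¹' Ioo (0:ℝ) 1)) := by rw [hpre]
      _ = (Measure.map (fun x : ℝ => 1 - x) volume).restrict (Ioo (0:ℝ) 1) :=
          (Measure.restrict_map hτ.measurable measurableSet_Ioo).symm
      _ = volume.restrict (Ioo (0:ℝ) 1) := by rw [hτ.map_eq]
  have hQ₂τae : AEMeasurable (fun u : ℝ => Q₂ (1 - u)) (volume.restrict (Ioo (0:ℝ) 1)) :=
    hQ₂ae.comp_quasiMeasurePreserving hτρ.quasiMeasurePreserving
  have intQ₂τ : Integrable (fun u : ℝ => Q₂ (1 - u)) (volume.restrict (Ioo (0:ℝ) 1)) :=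
    (hτρ.integrable_comp hQ₂ae.aestronglyMeasurable).2 int₂
  have hgae : AEMeasurable g (volume.restrict (Ioo (0:ℝ) 1)) := by
    have : g = fun u => Q₁ u + Q₂ (1 - u) := funext hg
    rw [this]
    exact hQ₁ae.add hQ₂τae
  have hgint : Integrable g (volume.restrict (Ioo (0:ℝ) 1)) := by
    refine (int₁.add intQ₂τ).congr (Eventually.of_forall fun u => ?_)
    exact (hg u).symm
  -- measurable representative of g
  have hgg' : g =ᵐ[volume.restrict (Ioo (0:ℝ) 1)] hgae.mk g := hgae.ae_eq_mk
  have hFS' : ∀ y, FS y = ((volume.restrict (Ioo (0:ℝ) 1)) {u | hgae.mk g u ≤ y}).toReal := by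
    intro y
    rw [hFS, Measure.map_apply_of_aemeasurable hgae measurableSet_Iic]
    congr 1
    apply measure_congr
    refine eventuallyEq_set.2 ?_
    filter_upwards [hgg'] with u hu
    simp [mem_preimage, mem_setOf_eq, hu]
  have hFSg : ∀ y, FS y = ((volume.restrict (Ioo (0:ℝ) 1)) {u | g u ≤ y}).toReal := by
    intro y
    rw [hFS' y]
    congr 1
    apply measure_congr
    refine eventuallyEq_set.2 ?_
    filter_upwards [hgg'] with u hu
    simp [mem_setOf_eq, hu]
  obtain ⟨hQSae, hmapS⟩ := aux_map (volume.restrict (Ioo (0:ℝ) 1)) (hgae.mk g) FS QS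
    hgae.measurable_mk hFS' hQS
  have intS : Integrable QS (volume.restrict (Ioo (0:ℝ) 1)) :=
    aux_integrable (volume.restrict (Ioo (0:ℝ) 1)) (hgae.mk g) FS QS
      hgae.measurable_mk (hgint.congr hgg') hFS' hQS
  -- pointwise bound `QS q ≤ g q` on `(0,1)`
  have hle : ∀ q ∈ Ioo (0:ℝ) 1, QS q ≤ g q := by
    intro q hq
    rw [aux_gal (volume.restrict (Ioo (0:ℝ) 1)) (hgae.mk g) FS QS hgae.measurable_mk
      hFS' hQS hq (g q), hFSg]
    have h1 : Ioo (0:ℝ) q ⊆ {u | g u ≤ g q} ∩ Ioo (0:ℝ) 1 := by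
      intro u hu
      have hu1 : u ∈ Ioo (0:ℝ) 1 := ⟨hu.1, hu.2.trans hq.2⟩
      exact ⟨hmono hu1 hq hu.2.le, hu1⟩
    have h2 : ENNReal.ofReal q ≤ (volume.restrict (Ioo (0:ℝ) 1)) {u | g u ≤ g q} := by
      rw [Measure.restrict_apply' measurableSet_Ioo]
      calc ENNReal.ofReal q = volume (Ioo (0:ℝ) q) := by rw [Real.volume_Ioo, sub_zero]
        _ ≤ volume ({u | g u ≤ g q} ∩ Ioo (0:ℝ) 1) := measure_mono h1
    calc q = (ENNReal.ofReal q).toReal := (ENNReal.toReal_ofReal hq.1.le).symm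
      _ ≤ _ := ENNReal.toReal_mono (measure_ne_top _ _) h2
  -- `QS` and `g` have the same law, hence are a.e. equal
  have hmapg : Measure.map QS (volume.restrict (Ioo (0:ℝ) 1))
      = Measure.map g (volume.restrict (Ioo (0:ℝ) 1)) := by
    rw [hmapS]
    exact (Measure.map_congr hgg').symm
  have hint_eq : ∫ u, QS u ∂(volume.restrict (Ioo (0:ℝ) 1))
      = ∫ u, g u ∂(volume.restrict (Ioo (0:ℝ) 1)) := by
    have h1 : ∫ y, y ∂(Measure.map QS (volume.restrict (Ioo (0:ℝ) 1)))
        = ∫ x, QS x ∂(volume.restrict (Ioo (0:ℝ) 1)) :=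
      integral_map hQSae aestronglyMeasurable_id
    have h2 : ∫ y, y ∂(Measure.map g (volume.restrict (Ioo (0:ℝ) 1)))
        = ∫ x, g x ∂(volume.restrict (Ioo (0:ℝ) 1)) :=
      integral_map hgae aestronglyMeasurable_id
    rw [← h1, hmapg, h2]
  have haeeq : g =ᵐ[volume.restrict (Ioo (0:ℝ) 1)] QS := by
    have hnn : 0 ≤ᵐ[volume.restrict (Ioo (0:ℝ) 1)] fun u => g u - QS u := by
      filter_upwards [ae_restrict_mem measurableSet_Ioo] with q hq
      simpa using sub_nonneg.2 (hle q hq)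
    have hint : Integrable (fun u => g u - QS u) (volume.restrict (Ioo (0:ℝ) 1)) :=
      hgint.sub intS
    have hzero : ∫ u, (g u - QS u) ∂(volume.restrict (Ioo (0:ℝ) 1)) = 0 := by
      rw [integral_sub hgint intS, hint_eq, sub_self]
    have := (integral_eq_zero_iff_of_nonneg_ae hnn hint).1 hzero
    filter_upwards [this] with u hu
    have hu' : g u - QS u = 0 := hu
    linarith
  -- transfer to interval integrals
  have hvol : ∀ᵐ x ∂(volume : Measure ℝ), x ∈ Ioo (0:ℝ) 1 → g x = QS x :=
    (ae_restrict_iff' measurableSet_Ioo).1 haeeq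
  have h1ne : ∀ᵐ x ∂(volume : Measure ℝ), x ≠ 1 := by
    rw [ae_iff]
    have : {x : ℝ | ¬x ≠ 1} = {1} := by ext x; simp
    rw [this]
    exact Real.volume_singleton
  have e0 : ∫ q in p..1, QS q = ∫ q in p..1, g q := by
    apply intervalIntegral.integral_congr_ae
    rw [uIoc_of_le hp1.le]
    filter_upwards [hvol, h1ne] with x hx hne hmem
    exact (hx ⟨lt_trans hp0 hmem.1, lt_of_le_of_ne hmem.2 hne⟩).symm
  have ii1 : IntervalIntegrable Q₁ volume p 1 := by
    rw [intervalIntegrable_iff_integrableOn_Ioo_of_le hp1.le]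
    exact int₁.mono_measure (Measure.restrict_mono (Ioo_subset_Ioo hp0.le le_rfl) le_rfl)
  have ii2 : IntervalIntegrable (fun x => Q₂ (1 - x)) volume p 1 := by
    rw [intervalIntegrable_iff_integrableOn_Ioo_of_le hp1.le]
    have hmp : MeasurePreserving (fun x : ℝ => 1 - x)
        (volume.restrict (Ioo p 1)) (volume.restrict (Ioo (0:ℝ) (1 - p))) := by
      refine ⟨hτ.measurable, ?_⟩
      have hpre2 : (fun x : ℝ => 1 - x) ⁻¹' Ioo (0:ℝ) (1 - p) = Ioo p 1 := by
        ext x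
        simp only [mem_preimage, mem_Ioo]
        constructor <;> (rintro ⟨h1, h2⟩; constructor <;> linarith)
      calc Measure.map (fun x : ℝ => 1 - x) (volume.restrict (Ioo p 1))
          = Measure.map (fun x : ℝ => 1 - x)
              (volume.restrict ((fun x : ℝ => 1 - x) ⁻¹' Ioo (0:ℝ) (1 - p))) := by rw [hpre2]
        _ = (Measure.map (fun x : ℝ => 1 - x) volume).restrict (Ioo (0:ℝ) (1 - p)) :=
            (Measure.restrict_map hτ.measurable measurableSet_Ioo).symm
        _ = volume.restrict (Ioo (0:ℝ) (1 - p)) := by rw [hτ.map_eq]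
    have hQ₂asm : AEStronglyMeasurable Q₂ (volume.restrict (Ioo (0:ℝ) (1 - p))) := by
      refine (hQ₂ae.mono_measure ?_).aestronglyMeasurable
      exact Measure.restrict_mono (Ioo_subset_Ioo le_rfl (by linarith)) le_rfl
    have hQ₂int : Integrable Q₂ (volume.restrict (Ioo (0:ℝ) (1 - p))) :=
      int₂.mono_measure (Measure.restrict_mono (Ioo_subset_Ioo le_rfl (by linarith)) le_rfl)
    exact (hmp.integrable_comp hQ₂asm).2 hQ₂int
  have e1 : ∫ q in p..1, g q = (∫ q in p..1, Q₁ q) + ∫ q in p..1, Q₂ (1 - q) := by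
    have hgfun : (fun q => g q) = fun q => Q₁ q + Q₂ (1 - q) := funext hg
    rw [hgfun, intervalIntegral.integral_add ii1 ii2]
  have e2 : ∫ q in p..1, Q₂ (1 - q) = ∫ q in (0:ℝ)..(1 - p), Q₂ q := by
    have := intervalIntegral.integral_comp_sub_left (a := p) (b := 1) Q₂ 1
    simpa using this
  rw [e0, e1, e2]
  have hne0 : (1:ℝ) - p ≠ 0 := by linarith
  have e3 : ∫ q in p..1, (Q₁ q + 1 / (1 - p) * ∫ q in (0:ℝ)..(1 - p), Q₂ q)
      = (∫ q in p..1, Q₁ q)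
        + (1 - p) * (1 / (1 - p) * ∫ q in (0:ℝ)..(1 - p), Q₂ q) := by
    rw [intervalIntegral.integral_add ii1 intervalIntegrable_const,
      intervalIntegral.integral_const, smul_eq_mul]
  rw [e3]
  field_simp
end

section
/- Let S^l = F_{X_1}^{-1}(U) + F_{X_2}^{-1}(1-U) with U uniform on (0,1), and suppose g(u) = F_{X_1}^{-1}(u) + F_{X_2}^{-1}(1-u) is nonincreasing on (0,1). Then for every p ∈ (0,1) at which F_{S^l} is continuous at F_{S^l}^{-1}(p), TVaR_p[S^l] = LTVaR_{1-p}[X_1] + TVaR_p[X_2]. -/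
open MeasureTheory Set

section quantile

variable {ν : Measure ℝ} {F Q : ℝ → ℝ}

lemma cdf_mono [IsFiniteMeasure ν] (hF : ∀ y, F y = (ν (Iic y)).toReal) : Monotone F := by
  intro a b hab
  rw [hF, hF]
  exact ENNReal.toReal_mono (measure_ne_top ν _) (measure_mono (Iic_subset_Iic.mpr hab))

lemma cdf_exists_lt [IsProbabilityMeasure ν] (hF : ∀ y, F y = (ν (Iic y)).toReal)
    {c : ℝ} (hc : 0 < c) : ∃ x, F x < c := by
  have hinter : (⋂ n : ℕ, Iic (-(n:ℝ))) = ∅ := by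
    ext x
    simp only [mem_iInter, mem_Iic, mem_empty_iff_false, iff_false, not_forall, not_le]
    obtain ⟨n, hn⟩ := exists_nat_gt (-x)
    exact ⟨n, by linarith⟩
  have htend : Filter.Tendsto (fun n : ℕ => ν (Iic (-(n:ℝ)))) Filter.atTop (nhds 0) := by
    have := tendsto_measure_iInter_atTop (μ := ν) (s := fun n : ℕ => Iic (-(n:ℝ)))
      (fun n => measurableSet_Iic.nullMeasurableSet)
      (fun n m hnm => Iic_subset_Iic.mpr (neg_le_neg (by exact_mod_cast hnm)))
      ⟨0, measure_ne_top ν _⟩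
    rwa [hinter, measure_empty] at this
  have htoReal : Filter.Tendsto (fun n : ℕ => F (-(n:ℝ))) Filter.atTop (nhds 0) := by
    have := (ENNReal.tendsto_toReal (by simp)).comp htend
    simpa [hF, Function.comp_def] using this
  obtain ⟨n, hn⟩ := (htoReal.eventually_lt_const hc).exists
  exact ⟨-(n:ℝ), hn⟩

lemma cdf_exists_ge [IsProbabilityMeasure ν] (hF : ∀ y, F y = (ν (Iic y)).toReal)
    {c : ℝ} (hc : c < 1) : ∃ x, c ≤ F x := by
  have htend : Filter.Tendsto (fun x : ℝ => ν (Iic x)) Filter.atTop (nhds 1) := by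
    simpa using tendsto_measure_Iic_atTop ν
  have htoReal : Filter.Tendsto F Filter.atTop (nhds 1) := by
    have h2 := (ENNReal.tendsto_toReal (by simp)).comp htend
    have heq : F = ENNReal.toReal ∘ fun x : ℝ => ν (Iic x) := funext fun y => hF y
    rw [heq]
    simpa using h2
  obtain ⟨x, hx⟩ := (htoReal.eventually_const_lt hc).exists
  exact ⟨x, hx.le⟩

lemma cdf_right [IsFiniteMeasure ν] (hF : ∀ y, F y = (ν (Iic y)).toReal)
    {t u : ℝ} (h : ∀ ε > 0, u ≤ F (t + ε)) : u ≤ F t := by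
  have hinter : (⋂ n : ℕ, Iic (t + 1/((n:ℝ)+1))) = Iic t := by
    ext x
    simp only [mem_iInter, mem_Iic]
    constructor
    · intro hx
      by_contra hxt
      push_neg at hxt
      obtain ⟨n, hn⟩ := exists_nat_one_div_lt (sub_pos.mpr hxt)
      have := hx n
      linarith
    · intro hx n
      have h0 : (0:ℝ) < 1/((n:ℝ)+1) := by positivity
      linarith
  have htend : Filter.Tendsto (fun n : ℕ => ν (Iic (t + 1/((n:ℝ)+1)))) Filter.atTop
      (nhds (ν (Iic t))) := by
    have := tendsto_measure_iInter_atTop (μ := ν) (s := fun n : ℕ => Iic (t + 1/((n:ℝ)+1)))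
      (fun n => measurableSet_Iic.nullMeasurableSet)
      (fun n m hnm => Iic_subset_Iic.mpr (by
        have h1 : 1/((m:ℝ)+1) ≤ 1/((n:ℝ)+1) := by
          apply one_div_le_one_div_of_le (by positivity)
          exact_mod_cast add_le_add_left (Nat.cast_le.mpr hnm) 1
        linarith))
      ⟨0, measure_ne_top ν _⟩
    rwa [hinter] at this
  have htoReal : Filter.Tendsto (fun n : ℕ => F (t + 1/((n:ℝ)+1))) Filter.atTop (nhds (F t)) := by
    have := (ENNReal.tendsto_toReal (measure_ne_top ν _)).comp htend
    simpa [hF, Function.comp_def] using this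
  exact ge_of_tendsto htoReal (Filter.Eventually.of_forall fun n => h _ (by positivity))

lemma quantile_bddBelow [IsProbabilityMeasure ν] (hF : ∀ y, F y = (ν (Iic y)).toReal)
    {c : ℝ} (hc : 0 < c) : BddBelow {x : ℝ | c ≤ F x} := by
  obtain ⟨x₀, hx₀⟩ := cdf_exists_lt hF hc
  refine ⟨x₀, fun y hy => ?_⟩
  by_contra hxy
  push_neg at hxy
  exact absurd (hy.trans (cdf_mono hF hxy.le)) (not_le.mpr hx₀)

lemma quantile_nonempty [IsProbabilityMeasure ν] (hF : ∀ y, F y = (ν (Iic y)).toReal)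
    {c : ℝ} (hc : c < 1) : {x : ℝ | c ≤ F x}.Nonempty := by
  obtain ⟨x, hx⟩ := cdf_exists_ge hF hc
  exact ⟨x, hx⟩

lemma quantile_le_iff [IsProbabilityMeasure ν]
    (hF : ∀ y, F y = (ν (Iic y)).toReal) (hQ : ∀ p, Q p = sInf {x : ℝ | p ≤ F x})
    {c : ℝ} (hc : c ∈ Ioo (0:ℝ) 1) (t : ℝ) : Q c ≤ t ↔ c ≤ F t := by
  constructor
  · intro hQt
    apply cdf_right hF
    intro ε hε
    have hlt : sInf {x : ℝ | c ≤ F x} < t + ε := by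
      rw [← hQ]; linarith
    obtain ⟨x, hx, hxt⟩ := exists_lt_of_csInf_lt (quantile_nonempty hF hc.2) hlt
    exact le_trans hx (cdf_mono hF hxt.le)
  · intro hFt
    rw [hQ]
    exact csInf_le (quantile_bddBelow hF hc.1) hFt

lemma quantile_monoOn [IsProbabilityMeasure ν]
    (hF : ∀ y, F y = (ν (Iic y)).toReal) (hQ : ∀ p, Q p = sInf {x : ℝ | p ≤ F x}) :
    MonotoneOn Q (Ioo (0:ℝ) 1) := by
  intro a ha b hb hab
  rw [hQ, hQ]
  exact csInf_le_csInf (quantile_bddBelow hF ha.1) (quantile_nonempty hF hb.2)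
    (fun x hx => hab.trans hx)

lemma quantile_map [IsProbabilityMeasure ν]
    (hF : ∀ y, F y = (ν (Iic y)).toReal) (hQ : ∀ p, Q p = sInf {x : ℝ | p ≤ F x}) :
    Measure.map Q (volume.restrict (Ioo (0:ℝ) 1)) = ν := by
  have hQm : AEMeasurable Q (volume.restrict (Ioo (0:ℝ) 1)) :=
    aemeasurable_restrict_of_monotoneOn measurableSet_Ioo (quantile_monoOn hF hQ)
  have hprob : IsProbabilityMeasure (volume.restrict (Ioo (0:ℝ) 1)) :=
    ⟨by simp [Real.volume_Ioo]⟩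
  haveI hprobmap : IsProbabilityMeasure (Measure.map Q (volume.restrict (Ioo (0:ℝ) 1))) :=
    Measure.isProbabilityMeasure_map hQm
  refine Measure.ext_of_Iic _ _ (fun t => ?_)
  rw [Measure.map_apply_of_aemeasurable hQm measurableSet_Iic,
    Measure.restrict_apply' measurableSet_Ioo]
  have hset : Q ⁻¹' Iic t ∩ Ioo 0 1 = Ioo (0:ℝ) 1 ∩ Iic (F t) := by
    ext u
    simp only [mem_inter_iff, mem_preimage, mem_Iic, mem_Ioo]
    constructor
    · rintro ⟨hQu, hu⟩
      exact ⟨hu, (quantile_le_iff hF hQ hu t).mp hQu⟩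
    · rintro ⟨hu, hFu⟩
      exact ⟨(quantile_le_iff hF hQ hu t).mpr hFu, hu⟩
  rw [hset]
  have h0 : 0 ≤ F t := by rw [hF]; exact ENNReal.toReal_nonneg
  have h1 : F t ≤ 1 := by
    rw [hF]
    have := ENNReal.toReal_mono (ENNReal.one_ne_top) (prob_le_one (μ := ν) (s := Iic t))
    simpa using this
  have key : (volume (Ioo (0:ℝ) 1 ∩ Iic (F t))) = ENNReal.ofReal (F t) := by
    rcases lt_or_ge (F t) 1 with hlt | hge
    · have hs : Ioo (0:ℝ) 1 ∩ Iic (F t) = Ioc 0 (F t) := by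
        ext u
        simp only [mem_inter_iff, mem_Ioo, mem_Iic, mem_Ioc]
        constructor
        · rintro ⟨⟨ha, hb⟩, hc⟩; exact ⟨ha, hc⟩
        · rintro ⟨ha, hb⟩; exact ⟨⟨ha, lt_of_le_of_lt hb hlt⟩, hb⟩
      rw [hs, Real.volume_Ioc, sub_zero]
    · have hF1 : F t = 1 := le_antisymm h1 hge
      have hs : Ioo (0:ℝ) 1 ∩ Iic (F t) = Ioo 0 1 := by
        rw [hF1]; exact inter_eq_left.mpr (fun u hu => hu.2.le)
      rw [hs, Real.volume_Ioo, hF1]; norm_num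
  rw [key, hF, ENNReal.ofReal_toReal (measure_ne_top ν _)]

lemma quantile_integrable [IsProbabilityMeasure ν]
    (hF : ∀ y, F y = (ν (Iic y)).toReal) (hQ : ∀ p, Q p = sInf {x : ℝ | p ≤ F x})
    (hint : Integrable id ν) : Integrable Q (volume.restrict (Ioo (0:ℝ) 1)) := by
  have hQm : AEMeasurable Q (volume.restrict (Ioo (0:ℝ) 1)) :=
    aemeasurable_restrict_of_monotoneOn measurableSet_Ioo (quantile_monoOn hF hQ)
  have h1 : Integrable id (Measure.map Q (volume.restrict (Ioo (0:ℝ) 1))) := by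
    rw [quantile_map hF hQ]; exact hint
  have := (integrable_map_measure aestronglyMeasurable_id hQm).mp h1
  simpa [Function.comp] using this

end quantile

/-- If `g` is nonincreasing on `(0,1)` and `F_{Sˡ}` is continuous at `F_{Sˡ}⁻¹(p)`, then
`TVaR_p[Sˡ] = LTVaR_{1-p}[X₁] + TVaR_p[X₂]`. -/
theorem tvar_countermonotonic_antitone_case {Ω₁ Ω₂ : Type*}
    [MeasurableSpace Ω₁] [MeasurableSpace Ω₂]
    (μ₁ : Measure Ω₁) (μ₂ : Measure Ω₂)
    [IsProbabilityMeasure μ₁] [IsProbabilityMeasure μ₂]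
    (X₁ : Ω₁ → ℝ) (hX₁ : Integrable X₁ μ₁)
    (X₂ : Ω₂ → ℝ) (hX₂ : Integrable X₂ μ₂)
    (F₁ F₂ Q₁ Q₂ : ℝ → ℝ)
    (hF₁ : ∀ y, F₁ y = (μ₁ {ω | X₁ ω ≤ y}).toReal)
    (hF₂ : ∀ y, F₂ y = (μ₂ {ω | X₂ ω ≤ y}).toReal)
    (hQ₁ : ∀ p, Q₁ p = sInf {x : ℝ | p ≤ F₁ x})
    (hQ₂ : ∀ p, Q₂ p = sInf {x : ℝ | p ≤ F₂ x})
    (g : ℝ → ℝ) (hg : ∀ u, g u = Q₁ u + Q₂ (1 - u))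
    (hanti : AntitoneOn g (Set.Ioo (0:ℝ) 1))
    (FS QS : ℝ → ℝ)
    (hFS : ∀ y, FS y =
      ((Measure.map g (volume.restrict (Set.Ioo (0:ℝ) 1))) (Set.Iic y)).toReal)
    (hQS : ∀ q, QS q = sInf {x : ℝ | q ≤ FS x})
    (p : ℝ) (hp : p ∈ Set.Ioo (0:ℝ) 1)
    (hcont : ContinuousAt FS (QS p)) :
    (1 / (1 - p)) * ∫ q in p..1, QS q =
      (1 / (1 - p)) * ∫ q in (0:ℝ)..(1 - p), Q₁ q +
        (1 / (1 - p)) * ∫ q in p..1, Q₂ q := by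
  have hvol01 : IsProbabilityMeasure (volume.restrict (Set.Ioo (0:ℝ) 1)) :=
    ⟨by simp [Real.volume_Ioo]⟩
  -- laws of X₁ and X₂
  have hX₁m : AEMeasurable X₁ μ₁ := hX₁.aemeasurable
  have hX₂m : AEMeasurable X₂ μ₂ := hX₂.aemeasurable
  have hprob₁ : IsProbabilityMeasure (Measure.map X₁ μ₁) := Measure.isProbabilityMeasure_map hX₁m
  have hprob₂ : IsProbabilityMeasure (Measure.map X₂ μ₂) := Measure.isProbabilityMeasure_map hX₂m
  have hF₁' : ∀ y, F₁ y = ((Measure.map X₁ μ₁) (Set.Iic y)).toReal := by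
    intro y
    rw [hF₁ y, Measure.map_apply_of_aemeasurable hX₁m measurableSet_Iic]
    rfl
  have hF₂' : ∀ y, F₂ y = ((Measure.map X₂ μ₂) (Set.Iic y)).toReal := by
    intro y
    rw [hF₂ y, Measure.map_apply_of_aemeasurable hX₂m measurableSet_Iic]
    rfl
  have hQ₁int : Integrable Q₁ (volume.restrict (Set.Ioo (0:ℝ) 1)) :=
    quantile_integrable hF₁' hQ₁
      ((integrable_map_measure aestronglyMeasurable_id hX₁m).mpr
        (by simpa [Function.comp] using hX₁))
  have hQ₂int : Integrable Q₂ (volume.restrict (Set.Ioo (0:ℝ) 1)) :=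
    quantile_integrable hF₂' hQ₂
      ((integrable_map_measure aestronglyMeasurable_id hX₂m).mpr
        (by simpa [Function.comp] using hX₂))
  have hQ₁mono : MonotoneOn Q₁ (Set.Ioo (0:ℝ) 1) := quantile_monoOn hF₁' hQ₁
  have hQ₂mono : MonotoneOn Q₂ (Set.Ioo (0:ℝ) 1) := quantile_monoOn hF₂' hQ₂
  -- measurability of g
  have hgm : AEMeasurable g (volume.restrict (Set.Ioo (0:ℝ) 1)) := by
    have h1 : AEMeasurable Q₁ (volume.restrict (Set.Ioo (0:ℝ) 1)) :=
      aemeasurable_restrict_of_monotoneOn measurableSet_Ioo hQ₁mono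
    have h2 : AEMeasurable (fun u => Q₂ (1 - u)) (volume.restrict (Set.Ioo (0:ℝ) 1)) := by
      apply aemeasurable_restrict_of_antitoneOn measurableSet_Ioo
      intro a ha b hb hab
      exact hQ₂mono ⟨by linarith [hb.2], by linarith [hb.1]⟩
        ⟨by linarith [ha.2], by linarith [ha.1]⟩ (by linarith)
    have hgeq : g = fun u => Q₁ u + Q₂ (1 - u) := funext hg
    rw [hgeq]
    exact h1.add h2
  have hprobS : IsProbabilityMeasure (Measure.map g (volume.restrict (Set.Ioo (0:ℝ) 1))) :=
    Measure.isProbabilityMeasure_map hgm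
  have hFSvol : ∀ x, FS x = (volume (g ⁻¹' Set.Iic x ∩ Set.Ioo 0 1)).toReal := by
    intro x
    rw [hFS x, Measure.map_apply_of_aemeasurable hgm measurableSet_Iic,
      Measure.restrict_apply' measurableSet_Ioo]
  have hfin : ∀ s : Set ℝ, volume (s ∩ Set.Ioo (0:ℝ) 1) ≠ ⊤ := by
    intro s
    refine (lt_of_le_of_lt (measure_mono Set.inter_subset_right) ?_).ne
    simp [Real.volume_Ioo]
  -- claim 1 : q ≤ FS (g (1 - q'')) for q'' ∈ (q, 1)
  have claim1 : ∀ q ∈ Set.Ioo (0:ℝ) 1, ∀ q'' ∈ Set.Ioo q 1, q ≤ FS (g (1 - q'')) := by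
    intro q hq q'' hq''
    have hq''A : (1 - q'') ∈ Set.Ioo (0:ℝ) 1 :=
      ⟨by linarith [hq''.2], by linarith [hq.1, hq''.1]⟩
    have hsub : Set.Ico (1 - q'') 1 ⊆ g ⁻¹' Set.Iic (g (1 - q'')) ∩ Set.Ioo 0 1 := by
      intro u hu
      have huA : u ∈ Set.Ioo (0:ℝ) 1 := ⟨by linarith [hu.1, hq''A.1], hu.2⟩
      exact ⟨hanti hq''A huA hu.1, huA⟩
    have hle : ENNReal.ofReal q'' ≤ volume (g ⁻¹' Set.Iic (g (1 - q'')) ∩ Set.Ioo 0 1) := by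
      calc ENNReal.ofReal q'' = volume (Set.Ico (1 - q'') 1) := by
            rw [Real.volume_Ico, sub_sub_cancel]
        _ ≤ _ := measure_mono hsub
    rw [hFSvol]
    calc q ≤ q'' := hq''.1.le
      _ = (ENNReal.ofReal q'').toReal := (ENNReal.toReal_ofReal (by linarith [hq.1, hq''.1])).symm
      _ ≤ _ := ENNReal.toReal_mono (hfin _) hle
  -- claim 2 : every x with q ≤ FS x satisfies g (1 - q') ≤ x for q' ∈ (0, q)
  have claim2 : ∀ q ∈ Set.Ioo (0:ℝ) 1, ∀ q' ∈ Set.Ioo (0:ℝ) q, ∀ x, q ≤ FS x →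
      g (1 - q') ≤ x := by
    intro q hq q' hq' x hx
    by_contra hcon
    push_neg at hcon
    have hq'A : (1 - q') ∈ Set.Ioo (0:ℝ) 1 :=
      ⟨by linarith [hq'.2, hq.2], by linarith [hq'.1]⟩
    have hsub : g ⁻¹' Set.Iic x ∩ Set.Ioo 0 1 ⊆ Set.Ioo (1 - q') 1 := by
      intro u hu
      refine ⟨?_, hu.2.2⟩
      by_contra hu'
      push_neg at hu'
      have hgu : g (1 - q') ≤ g u := hanti hu.2 hq'A hu'
      have hux : g u ≤ x := hu.1
      linarith
    have hFSle : FS x ≤ q' := by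
      rw [hFSvol]
      calc (volume (g ⁻¹' Set.Iic x ∩ Set.Ioo 0 1)).toReal
          ≤ (volume (Set.Ioo (1 - q') 1)).toReal := by
            apply ENNReal.toReal_mono _ (measure_mono hsub)
            simp [Real.volume_Ioo]
        _ = q' := by rw [Real.volume_Ioo, sub_sub_cancel, ENNReal.toReal_ofReal hq'.1.le]
    linarith [hq'.2]
  -- the increasing rearrangement h
  set h : ℝ → ℝ := fun u => Q₁ (1 - u) + Q₂ u with hh
  have hgh : ∀ u, g (1 - u) = h u := by
    intro u
    rw [hg, sub_sub_cancel]
  have hhmono : MonotoneOn h (Set.Ioo (0:ℝ) 1) := by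
    intro a ha b hb hab
    rw [← hgh, ← hgh]
    exact hanti ⟨by linarith [hb.2], by linarith [hb.1]⟩
      ⟨by linarith [ha.2], by linarith [ha.1]⟩ (by linarith)
  -- sandwich
  have hup : ∀ q ∈ Set.Ioo (0:ℝ) 1, ∀ q'' ∈ Set.Ioo q 1, QS q ≤ h q'' := by
    intro q hq q'' hq''
    rw [hQS, ← hgh]
    refine csInf_le ⟨g (1 - q/2), fun x hx => claim2 q hq (q/2)
      ⟨half_pos hq.1, half_lt_self hq.1⟩ x hx⟩ (claim1 q hq q'' hq'')
  have hlow : ∀ q ∈ Set.Ioo (0:ℝ) 1, ∀ q' ∈ Set.Ioo (0:ℝ) q, h q' ≤ QS q := by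
    intro q hq q' hq'
    rw [hQS, ← hgh]
    refine le_csInf ⟨g (1 - (q+1)/2), claim1 q hq ((q+1)/2)
      ⟨by linarith [hq.2], by linarith [hq.2]⟩⟩ (fun x hx => claim2 q hq q' hq' x hx)
  -- the exceptional set is countable
  set E : Set ℝ := {q ∈ Set.Ioo p 1 | QS q ≠ h q} with hE
  have hEsub : E ⊆ Set.Ioo (0:ℝ) 1 := fun q hq =>
    ⟨lt_trans hp.1 hq.1.1, hq.1.2⟩
  have hEcount : E.Countable := by
    set L : ℝ → ℝ := fun q => sSup (h '' Set.Ioo 0 q) with hL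
    set R : ℝ → ℝ := fun q => sInf (h '' Set.Ioo q 1) with hR
    have himgne1 : ∀ q ∈ Set.Ioo (0:ℝ) 1, (h '' Set.Ioo 0 q).Nonempty :=
      fun q hq => ⟨h (q/2), ⟨q/2, ⟨half_pos hq.1, half_lt_self hq.1⟩, rfl⟩⟩
    have himgne2 : ∀ q ∈ Set.Ioo (0:ℝ) 1, (h '' Set.Ioo q 1).Nonempty :=
      fun q hq => ⟨h ((q+1)/2), ⟨(q+1)/2, ⟨by linarith [hq.2], by linarith [hq.2]⟩, rfl⟩⟩
    have hbddA : ∀ q ∈ Set.Ioo (0:ℝ) 1, BddAbove (h '' Set.Ioo 0 q) := by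
      rintro q hq
      refine ⟨QS q, ?_⟩
      rintro y ⟨q', hq', rfl⟩
      exact hlow q hq q' hq'
    have hbddB : ∀ q ∈ Set.Ioo (0:ℝ) 1, BddBelow (h '' Set.Ioo q 1) := by
      rintro q hq
      refine ⟨QS q, ?_⟩
      rintro y ⟨q'', hq'', rfl⟩
      exact hup q hq q'' hq''
    have hLQS : ∀ q ∈ Set.Ioo (0:ℝ) 1, L q ≤ QS q := by
      intro q hq
      refine csSup_le (himgne1 q hq) ?_
      rintro y ⟨q', hq', rfl⟩
      exact hlow q hq q' hq'
    have hQSR : ∀ q ∈ Set.Ioo (0:ℝ) 1, QS q ≤ R q := by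
      intro q hq
      refine le_csInf (himgne2 q hq) ?_
      rintro y ⟨q'', hq'', rfl⟩
      exact hup q hq q'' hq''
    have hLh : ∀ q ∈ Set.Ioo (0:ℝ) 1, L q ≤ h q := by
      intro q hq
      refine csSup_le (himgne1 q hq) ?_
      rintro y ⟨q', hq', rfl⟩
      exact hhmono ⟨hq'.1, lt_trans hq'.2 hq.2⟩ hq hq'.2.le
    have hhR : ∀ q ∈ Set.Ioo (0:ℝ) 1, h q ≤ R q := by
      intro q hq
      refine le_csInf (himgne2 q hq) ?_
      rintro y ⟨q'', hq'', rfl⟩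
      exact hhmono hq ⟨lt_trans hq.1 hq''.1, hq''.2⟩ hq''.1.le
    have hex : ∀ q ∈ E, ∃ r : ℚ, L q < (r:ℝ) ∧ (r:ℝ) < R q := by
      intro q hqE
      have hqA : q ∈ Set.Ioo (0:ℝ) 1 := hEsub hqE
      have hLR : L q < R q := by
        by_contra hcon
        push_neg at hcon
        have h1 : QS q = h q :=
          le_antisymm ((hQSR q hqA).trans (hcon.trans (hLh q hqA)))
            ((hhR q hqA).trans (hcon.trans (hLQS q hqA)))
        exact hqE.2 h1
      exact exists_rat_btwn hLR
    choose! r hr1 hr2 using hex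
    have hinj : ∀ q1 ∈ E, ∀ q2 ∈ E, q1 < q2 → (r q1 : ℝ) < r q2 := by
      intro q1 h1 q2 h2 hlt
      have hA1 : q1 ∈ Set.Ioo (0:ℝ) 1 := hEsub h1
      have hA2 : q2 ∈ Set.Ioo (0:ℝ) 1 := hEsub h2
      have hm1 : (q1 + q2)/2 ∈ Set.Ioo q1 1 := ⟨by linarith, by linarith [hA2.2]⟩
      have hm2 : (q1 + q2)/2 ∈ Set.Ioo (0:ℝ) q2 := ⟨by linarith [hA1.1], by linarith⟩
      calc (r q1 : ℝ) < R q1 := hr2 q1 h1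
        _ ≤ h ((q1 + q2)/2) := csInf_le (hbddB q1 hA1) ⟨(q1 + q2)/2, hm1, rfl⟩
        _ ≤ L q2 := le_csSup (hbddA q2 hA2) ⟨(q1 + q2)/2, hm2, rfl⟩
        _ < r q2 := hr1 q2 h2
    have hinjf : Function.Injective (fun q : E => r q) := by
      rintro ⟨a, ha⟩ ⟨b, hb⟩ hab
      simp only at hab
      rcases lt_trichotomy a b with hlt | heq | hgt
      · exact absurd (congrArg (fun x : ℚ => (x:ℝ)) hab) (hinj a ha b hb hlt).ne
      · exact Subtype.ext heq
      · exact absurd (congrArg (fun x : ℚ => (x:ℝ)) hab.symm) (hinj b hb a ha hgt).ne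
    exact Set.countable_coe_iff.mp hinjf.countable
  -- a.e. equality on the interval of integration
  have hae : ∀ᵐ q ∂(volume : Measure ℝ), q ∈ Set.uIoc p 1 → QS q = h q := by
    have hE0 : (volume : Measure ℝ) (E ∪ {1}) = 0 :=
      (hEcount.union (Set.countable_singleton 1)).measure_zero _
    filter_upwards [measure_eq_zero_iff_ae_notMem.mp hE0] with q hq hmem
    rw [Set.uIoc_of_le hp.2.le] at hmem
    have hq1 : q ≠ 1 := fun hq1 => hq (Or.inr (by simp [hq1]))
    have hqIoo : q ∈ Set.Ioo p 1 := ⟨hmem.1, lt_of_le_of_ne hmem.2 hq1⟩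
    by_contra hne
    exact hq (Or.inl ⟨hqIoo, hne⟩)
  -- integrability of the pieces
  have hQ₂ii : IntervalIntegrable Q₂ volume p 1 := by
    rw [intervalIntegrable_iff_integrableOn_Ioo_of_le hp.2.le]
    exact hQ₂int.mono_measure
      (Measure.restrict_mono (Set.Ioo_subset_Ioo hp.1.le le_rfl) le_rfl)
  have hQ₁ii0 : IntervalIntegrable Q₁ volume 0 (1 - p) := by
    rw [intervalIntegrable_iff_integrableOn_Ioo_of_le (by linarith [hp.2] : (0:ℝ) ≤ 1 - p)]
    exact hQ₁int.mono_measure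
      (Measure.restrict_mono (Set.Ioo_subset_Ioo le_rfl (by linarith [hp.1])) le_rfl)
  have hQ₁ii : IntervalIntegrable (fun q => Q₁ (1 - q)) volume p 1 := by
    have := (hQ₁ii0.comp_sub_left 1).symm
    simpa [sub_sub_cancel] using this
  -- compute the integral
  have hsum : ∫ q in p..1, QS q = (∫ q in (0:ℝ)..(1 - p), Q₁ q) + ∫ q in p..1, Q₂ q := by
    rw [intervalIntegral.integral_congr_ae hae]
    have hsplit : ∫ q in p..1, h q =
        (∫ q in p..1, Q₁ (1 - q)) + ∫ q in p..1, Q₂ q := by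
      rw [hh]
      exact intervalIntegral.integral_add hQ₁ii hQ₂ii
    rw [hsplit]
    congr 1
    have := intervalIntegral.integral_comp_sub_left (a := p) (b := 1) Q₁ 1
    simpa [sub_sub_cancel] using this
  rw [hsum, intervalIntegral.integral_add hQ₁ii0 intervalIntegrable_const,
    intervalIntegral.integral_const, smul_eq_mul]
  have hne : (1:ℝ) - p ≠ 0 := by linarith [hp.2]
  field_simp
  ring
end

section
/- If g(u) = F_{X_1}^{-1}(u) + F_{X_2}^{-1}(1-u) is strictly monotone on (0,1), then the dependence uncertainty spread p ↦ TVaR_p[S^u] - TVaR_p[S^l] is a nondecreasing function of p on (0,1). -/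
open MeasureTheory Set ProbabilityTheory Filter

noncomputable section SpreadAux

/-- Uniform measure on `(0,1)`. -/
def unif : Measure ℝ := volume.restrict (Set.Ioo 0 1)

instance : IsProbabilityMeasure unif :=
  ⟨by simp [unif, Measure.restrict_apply, Real.volume_Ioo]⟩

/-- Generalized inverse (quantile). -/
def myQ (ν : Measure ℝ) (p : ℝ) : ℝ := sInf {x | p ≤ cdf ν x}

variable {ν : Measure ℝ} [IsProbabilityMeasure ν]

lemma myQ_nonemptyS {p : ℝ} (hp : p < 1) : {x | p ≤ cdf ν x}.Nonempty := by
  obtain ⟨x, hx⟩ := ((tendsto_cdf_atTop ν).eventually (eventually_ge_nhds hp)).exists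
  exact ⟨x, hx⟩

lemma myQ_bddS {p : ℝ} (hp : 0 < p) : BddBelow {x | p ≤ cdf ν x} := by
  obtain ⟨x, hx⟩ := ((tendsto_cdf_atBot ν).eventually (eventually_lt_nhds hp)).exists
  refine ⟨x, fun y hy => ?_⟩
  by_contra h
  exact absurd (le_trans hy (monotone_cdf ν (le_of_lt (lt_of_not_ge h)))) (not_le.2 hx)

lemma le_cdf_myQ {p : ℝ} (hp0 : 0 < p) (hp1 : p < 1) : p ≤ cdf ν (myQ ν p) := by
  have hcont := (cdf ν).right_continuous (myQ ν p)
  have h1 : Tendsto (cdf ν) (nhdsWithin (myQ ν p) (Ioi (myQ ν p))) (nhds (cdf ν (myQ ν p))) :=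
    hcont.tendsto.mono_left (nhdsWithin_mono _ Ioi_subset_Ici_self)
  refine ge_of_tendsto h1 ?_
  filter_upwards [self_mem_nhdsWithin] with y hy
  obtain ⟨s, hs, hsy⟩ := exists_lt_of_csInf_lt (myQ_nonemptyS hp1) hy
  exact le_trans hs (monotone_cdf ν hsy.le)

lemma myQ_le_iff {p y : ℝ} (hp0 : 0 < p) (hp1 : p < 1) :
    myQ ν p ≤ y ↔ p ≤ cdf ν y := by
  constructor
  · intro h
    exact le_trans (le_cdf_myQ hp0 hp1) (monotone_cdf ν h)
  · intro h
    exact csInf_le (myQ_bddS hp0) h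

lemma myQ_monotoneOn : MonotoneOn (myQ ν) (Set.Ioo 0 1) := by
  intro p hp q hq hpq
  exact csInf_le_csInf (myQ_bddS hp.1) (myQ_nonemptyS hq.2)
    (fun x hx => le_trans hpq hx)

lemma myQ_aemeasurable : AEMeasurable (myQ ν) unif :=
  aemeasurable_restrict_of_monotoneOn measurableSet_Ioo myQ_monotoneOn

lemma map_myQ_unif : Measure.map (myQ ν) unif = ν := by
  refine Measure.ext_of_Iic _ _ (fun y => ?_)
  rw [Measure.map_apply_of_aemeasurable myQ_aemeasurable measurableSet_Iic]
  have hae : (myQ ν ⁻¹' Iic y : Set ℝ) =ᵐ[unif] (Iic (cdf ν y) : Set ℝ) := by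
    filter_upwards [ae_restrict_mem (μ := volume) measurableSet_Ioo] with u hu
    simp only [mem_preimage, mem_Iic, eq_iff_iff]
    exact myQ_le_iff hu.1 hu.2
  rw [measure_congr hae, unif, Measure.restrict_apply measurableSet_Iic]
  have h0 : 0 ≤ cdf ν y := cdf_nonneg ν y
  have h1 : cdf ν y ≤ 1 := cdf_le_one ν y
  rcases lt_or_eq_of_le h1 with h | h
  · have : Iic (cdf ν y) ∩ Ioo 0 1 = Ioc 0 (cdf ν y) := by
      ext u
      simp only [mem_inter_iff, mem_Iic, mem_Ioo, mem_Ioc]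
      constructor
      · rintro ⟨hu, h0u, _⟩; exact ⟨h0u, hu⟩
      · rintro ⟨h0u, hu⟩; exact ⟨hu, h0u, lt_of_le_of_lt hu h⟩
    rw [this, Real.volume_Ioc, ← ofReal_cdf ν y, sub_zero]
  · have : Iic (cdf ν y) ∩ Ioo 0 1 = Ioo 0 1 := by
      apply inter_eq_self_of_subset_right
      intro u hu
      simp only [mem_Iic]
      rw [h]; exact hu.2.le
    rw [this, Real.volume_Ioo, ← ofReal_cdf ν y, ← h]
    norm_num

lemma integral_myQ_eq : ∫ u, myQ ν u ∂unif = ∫ x, x ∂ν := by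
  have : ∫ x, id x ∂(Measure.map (myQ ν) unif) = ∫ u, id (myQ ν u) ∂unif :=
    integral_map myQ_aemeasurable aestronglyMeasurable_id
  rw [map_myQ_unif] at this
  exact this.symm

lemma integrable_myQ_iff : Integrable (myQ ν) unif ↔ Integrable (fun x => x) ν := by
  have := integrable_map_measure (μ := unif) (f := myQ ν) (g := fun x : ℝ => x)
    aestronglyMeasurable_id myQ_aemeasurable
  rw [map_myQ_unif] at this
  exact this.symm.trans (by rfl)

end SpreadAux

noncomputable section SpreadAux2

open MeasureTheory Set ProbabilityTheory Filter

lemma myQ_map_le {φ : ℝ → ℝ} (hφ : MonotoneOn φ (Set.Ioo 0 1)) (hm : AEMeasurable φ unif)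
    {q : ℝ} (hq : q ∈ Set.Ioo (0:ℝ) 1) :
    myQ (Measure.map φ unif) q ≤ φ q := by
  haveI : IsProbabilityMeasure (Measure.map φ unif) := Measure.isProbabilityMeasure_map hm
  refine csInf_le (myQ_bddS hq.1) ?_
  show q ≤ cdf (Measure.map φ unif) (φ q)
  rw [cdf_eq_real, measureReal_def, Measure.map_apply_of_aemeasurable hm measurableSet_Iic]
  have hsub : Set.Ioo 0 q ⊆ φ ⁻¹' (Iic (φ q)) := by
    intro u hu
    have hu1 : u ∈ Set.Ioo (0:ℝ) 1 := ⟨hu.1, hu.2.trans hq.2⟩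
    exact hφ hu1 hq hu.2.le
  have hq' : ENNReal.ofReal q ≤ unif (φ ⁻¹' Iic (φ q)) := by
    refine le_trans (le_of_eq ?_) (measure_mono hsub)
    rw [unif, Measure.restrict_apply measurableSet_Ioo,
      Set.inter_eq_self_of_subset_left (Set.Ioo_subset_Ioo le_rfl hq.2.le),
      Real.volume_Ioo, sub_zero]
  calc q = (ENNReal.ofReal q).toReal := by rw [ENNReal.toReal_ofReal hq.1.le]
    _ ≤ (unif (φ ⁻¹' Iic (φ q))).toReal := ENNReal.toReal_mono (measure_ne_top _ _) hq'

lemma myQ_map_ae_eq {φ : ℝ → ℝ} (hφ : MonotoneOn φ (Set.Ioo 0 1)) (hm : AEMeasurable φ unif)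
    (hint : Integrable φ unif) :
    myQ (Measure.map φ unif) =ᵐ[unif] φ := by
  haveI : IsProbabilityMeasure (Measure.map φ unif) := Measure.isProbabilityMeasure_map hm
  set ν := Measure.map φ unif with hν
  have hid : Integrable (fun x : ℝ => x) ν := by
    have := integrable_map_measure (μ := unif) (f := φ) (g := fun x : ℝ => x)
      aestronglyMeasurable_id hm
    exact this.mpr hint
  have hQint : Integrable (myQ ν) unif := integrable_myQ_iff.mpr hid
  have hle : ∀ᵐ u ∂unif, myQ ν u ≤ φ u := by
    filter_upwards [ae_restrict_mem (μ := volume) measurableSet_Ioo] with u hu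
    exact myQ_map_le hφ hm hu
  have hint2 : ∫ u, φ u ∂unif = ∫ u, myQ ν u ∂unif := by
    rw [integral_myQ_eq]
    have : ∫ x, id x ∂ν = ∫ u, id (φ u) ∂unif := integral_map hm aestronglyMeasurable_id
    exact this.symm
  have h0 : ∫ u, (φ u - myQ ν u) ∂unif = 0 := by
    rw [integral_sub hint hQint, hint2, sub_self]
  have hnn : 0 ≤ᵐ[unif] fun u => φ u - myQ ν u := by
    filter_upwards [hle] with u hu
    simpa [sub_nonneg] using hu
  have := (integral_eq_zero_iff_of_nonneg_ae hnn (hint.sub hQint)).mp h0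
  filter_upwards [this] with u hu
  have : φ u - myQ ν u = 0 := hu
  linarith

lemma integrable_myQ_map {Ω : Type*} [MeasurableSpace Ω] (μ : Measure Ω)
    [IsProbabilityMeasure μ] (X : Ω → ℝ) (hX : Integrable X μ) :
    Integrable (myQ (Measure.map X μ)) unif := by
  haveI : IsProbabilityMeasure (Measure.map X μ) :=
    Measure.isProbabilityMeasure_map hX.aemeasurable
  rw [integrable_myQ_iff]
  exact (integrable_map_measure aestronglyMeasurable_id hX.aemeasurable).mpr hX

lemma cdf_map_eq {Ω : Type*} [MeasurableSpace Ω] (μ : Measure Ω)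
    [IsProbabilityMeasure μ] (X : Ω → ℝ) (hX : Integrable X μ) (y : ℝ) :
    cdf (Measure.map X μ) y = (μ {ω | X ω ≤ y}).toReal := by
  haveI : IsProbabilityMeasure (Measure.map X μ) :=
    Measure.isProbabilityMeasure_map hX.aemeasurable
  rw [cdf_eq_real, measureReal_def, Measure.map_apply_of_aemeasurable hX.aemeasurable measurableSet_Iic]
  rfl

lemma map_one_sub_unif : Measure.map (fun u : ℝ => 1 - u) unif = unif := by
  have hT : Measurable (fun u : ℝ => 1 - u) := measurable_const.sub measurable_id
  have hpre : (fun u : ℝ => 1 - u) ⁻¹' Set.Ioo 0 1 = Set.Ioo 0 1 := by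
    ext u
    simp only [Set.mem_preimage, Set.mem_Ioo]
    constructor <;> rintro ⟨h1, h2⟩ <;> constructor <;> linarith
  have := Measure.restrict_map (μ := volume) hT measurableSet_Ioo (s := Set.Ioo 0 1)
  rw [Measure.map_sub_left_eq_self volume (1:ℝ), hpre] at this
  exact this.symm

end SpreadAux2

noncomputable section SpreadAux3

open MeasureTheory Set Filter intervalIntegral

lemma tail_avg_mono {d : ℝ → ℝ} {p q : ℝ} (hp : p ∈ Set.Ioo (0:ℝ) 1)
    (hq : q ∈ Set.Ioo (0:ℝ) 1) (hpq : p ≤ q)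
    (hd : ∀ r ∈ Set.Ioo (0:ℝ) 1, ∀ s ∈ Set.Ioo (0:ℝ) 1, r ≤ s → d r ≤ d s)
    (hint : IntervalIntegrable d volume p 1) :
    (1 / (1 - p)) * ∫ r in p..1, d r ≤ (1 / (1 - q)) * ∫ r in q..1, d r := by
  have h1p : (0:ℝ) < 1 - p := by linarith [hp.2]
  have h1q : (0:ℝ) < 1 - q := by linarith [hq.2]
  have hsub1 : Set.uIcc p q ⊆ Set.uIcc p 1 := by
    rw [Set.uIcc_of_le hpq, Set.uIcc_of_le (le_of_lt hp.2)]
    exact Set.Icc_subset_Icc le_rfl hq.2.le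
  have hsub2 : Set.uIcc q 1 ⊆ Set.uIcc p 1 := by
    rw [Set.uIcc_of_le (le_of_lt hq.2), Set.uIcc_of_le (le_of_lt hp.2)]
    exact Set.Icc_subset_Icc hpq le_rfl
  have h1 : IntervalIntegrable d volume p q := hint.mono_set hsub1
  have h2 : IntervalIntegrable d volume q 1 := hint.mono_set hsub2
  set A := ∫ r in p..q, d r with hA
  set B := ∫ r in q..1, d r with hB
  have hAB : ∫ r in p..1, d r = A + B :=
    (integral_add_adjacent_intervals h1 h2).symm
  have key : (1 - q) * A ≤ (q - p) * B := by
    rcases eq_or_lt_of_le hpq with rfl | hplt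
    · simp [hA, integral_same]
    · have claim1 : ∀ s ∈ Set.Ioo q 1, A ≤ (q - p) * d s := by
        intro s hs
        have hs01 : s ∈ Set.Ioo (0:ℝ) 1 := ⟨hq.1.trans hs.1, hs.2⟩
        have : A ≤ ∫ _ in p..q, d s := by
          refine integral_mono_on hpq h1 intervalIntegrable_const (fun r hr => ?_)
          exact hd r ⟨lt_of_lt_of_le hp.1 hr.1, lt_of_le_of_lt hr.2 hq.2⟩ s hs01
            (hr.2.trans hs.1.le)
        simpa [intervalIntegral.integral_const, smul_eq_mul] using this
      have hae : (fun _ : ℝ => A) ≤ᵐ[volume.restrict (Set.Icc q 1)]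
          fun s => (q - p) * d s := by
        rw [← Measure.restrict_congr_set Ioo_ae_eq_Icc]
        filter_upwards [ae_restrict_mem (μ := volume) measurableSet_Ioo] with s hs
        exact claim1 s hs
      have step : ∫ _ in q..1, A ≤ ∫ s in q..1, (q - p) * d s :=
        integral_mono_ae_restrict hq.2.le intervalIntegrable_const
          (h2.const_mul _) hae
      rw [intervalIntegral.integral_const, intervalIntegral.integral_const_mul, smul_eq_mul] at step
      linarith [step]
  rw [hAB, div_mul_eq_mul_div, div_mul_eq_mul_div, div_le_div_iff₀ h1p h1q]
  nlinarith [key]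

end SpreadAux3

/-- If `g` is strictly monotone on `(0,1)`, the dependence uncertainty spread
`p ↦ TVaR_p[Sᵘ] - TVaR_p[Sˡ]` is nondecreasing on `(0,1)`. -/
theorem spread_monotone_of_strict_monotone {Ω₁ Ω₂ : Type*}
    [MeasurableSpace Ω₁] [MeasurableSpace Ω₂]
    (μ₁ : Measure Ω₁) (μ₂ : Measure Ω₂)
    [IsProbabilityMeasure μ₁] [IsProbabilityMeasure μ₂]
    (X₁ : Ω₁ → ℝ) (hX₁ : Integrable X₁ μ₁)
    (X₂ : Ω₂ → ℝ) (hX₂ : Integrable X₂ μ₂)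
    (F₁ F₂ Q₁ Q₂ : ℝ → ℝ)
    (hF₁ : ∀ y, F₁ y = (μ₁ {ω | X₁ ω ≤ y}).toReal)
    (hF₂ : ∀ y, F₂ y = (μ₂ {ω | X₂ ω ≤ y}).toReal)
    (hQ₁ : ∀ p, Q₁ p = sInf {x : ℝ | p ≤ F₁ x})
    (hQ₂ : ∀ p, Q₂ p = sInf {x : ℝ | p ≤ F₂ x})
    (f g : ℝ → ℝ)
    (hf : ∀ u, f u = Q₁ u + Q₂ u)
    (hg : ∀ u, g u = Q₁ u + Q₂ (1 - u))
    (hstrict : StrictMonoOn g (Set.Ioo (0:ℝ) 1) ∨ StrictAntiOn g (Set.Ioo (0:ℝ) 1))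
    (FSu QSu FSl QSl : ℝ → ℝ)
    (hFSu : ∀ y, FSu y =
      ((Measure.map f (volume.restrict (Set.Ioo (0:ℝ) 1))) (Set.Iic y)).toReal)
    (hQSu : ∀ q, QSu q = sInf {x : ℝ | q ≤ FSu x})
    (hFSl : ∀ y, FSl y =
      ((Measure.map g (volume.restrict (Set.Ioo (0:ℝ) 1))) (Set.Iic y)).toReal)
    (hQSl : ∀ q, QSl q = sInf {x : ℝ | q ≤ FSl x}) :
    ∀ p q : ℝ, p ∈ Set.Ioo (0:ℝ) 1 → q ∈ Set.Ioo (0:ℝ) 1 → p ≤ q →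
      (1 / (1 - p)) * ∫ r in p..1, QSu r - (1 / (1 - p)) * ∫ r in p..1, QSl r ≤
        (1 / (1 - q)) * ∫ r in q..1, QSu r - (1 / (1 - q)) * ∫ r in q..1, QSl r := by
  intro p q hp hq hpq
  have hT : Measurable (fun u : ℝ => 1 - u) := measurable_const.sub measurable_id
  have hX₁m := hX₁.aemeasurable
  have hX₂m := hX₂.aemeasurable
  haveI hP1 : IsProbabilityMeasure (Measure.map X₁ μ₁) := Measure.isProbabilityMeasure_map hX₁m
  haveI hP2 : IsProbabilityMeasure (Measure.map X₂ μ₂) := Measure.isProbabilityMeasure_map hX₂m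
  -- identify Q₁, Q₂ with quantile functions
  have hF₁' : F₁ = cdf (Measure.map X₁ μ₁) := funext fun y => by
    rw [hF₁, cdf_map_eq μ₁ X₁ hX₁]
  have hF₂' : F₂ = cdf (Measure.map X₂ μ₂) := funext fun y => by
    rw [hF₂, cdf_map_eq μ₂ X₂ hX₂]
  have hQ₁' : Q₁ = myQ (Measure.map X₁ μ₁) := funext fun r => by
    rw [hQ₁, myQ, hF₁']
  have hQ₂' : Q₂ = myQ (Measure.map X₂ μ₂) := funext fun r => by
    rw [hQ₂, myQ, hF₂']
  have hQ₁mono : MonotoneOn Q₁ (Set.Ioo 0 1) := hQ₁' ▸ myQ_monotoneOn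
  have hQ₂mono : MonotoneOn Q₂ (Set.Ioo 0 1) := hQ₂' ▸ myQ_monotoneOn
  have hQ₁int : Integrable Q₁ unif := hQ₁' ▸ integrable_myQ_map μ₁ X₁ hX₁
  have hQ₂int : Integrable Q₂ unif := hQ₂' ▸ integrable_myQ_map μ₂ X₂ hX₂
  -- integrability of reflected quantile functions
  have hreflect : ∀ h : ℝ → ℝ, Integrable h unif → Integrable (fun u => h (1 - u)) unif := by
    intro h hint
    have hmap := integrable_map_measure (μ := unif) (f := fun u : ℝ => 1 - u)
      (g := h) (by rw [map_one_sub_unif]; exact hint.aestronglyMeasurable)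
      hT.aemeasurable
    rw [map_one_sub_unif] at hmap
    exact hmap.mp hint
  have hQ₂rint : Integrable (fun u => Q₂ (1 - u)) unif := hreflect Q₂ hQ₂int
  have hQ₁rint : Integrable (fun u => Q₁ (1 - u)) unif := hreflect Q₁ hQ₁int
  -- the function f
  have hfmono : MonotoneOn f (Set.Ioo 0 1) := by
    intro a ha b hb hab
    rw [hf, hf]
    exact add_le_add (hQ₁mono ha hb hab) (hQ₂mono ha hb hab)
  have hfae : AEMeasurable f unif :=
    aemeasurable_restrict_of_monotoneOn measurableSet_Ioo hfmono
  have hfint : Integrable f unif := by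
    have : f = fun u => Q₁ u + Q₂ u := funext hf
    rw [this]; exact hQ₁int.add hQ₂int
  haveI : IsProbabilityMeasure (Measure.map f unif) := Measure.isProbabilityMeasure_map hfae
  have hFSu' : FSu = cdf (Measure.map f unif) := funext fun y => by
    rw [hFSu, cdf_eq_real, measureReal_def]; rfl
  have hQSu' : QSu = myQ (Measure.map f unif) := funext fun r => by
    rw [hQSu, myQ, hFSu']
  have hQSuae : QSu =ᵐ[unif] f := hQSu' ▸ myQ_map_ae_eq hfmono hfae hfint
  -- case analysis on monotonicity of g: QSl is a.e. equal to a nice function gt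
  obtain ⟨gt, hgt_ae, hgt_int, hmono_d⟩ : ∃ gt : ℝ → ℝ, (QSl =ᵐ[unif] gt) ∧
      Integrable gt unif ∧
      (∀ r ∈ Set.Ioo (0:ℝ) 1, ∀ s ∈ Set.Ioo (0:ℝ) 1, r ≤ s →
        f r - gt r ≤ f s - gt s) := by
    have hgint : Integrable g unif := by
      have : g = fun u => Q₁ u + Q₂ (1 - u) := funext hg
      rw [this]; exact hQ₁int.add hQ₂rint
    rcases hstrict with hmono | hanti
    · -- g increasing
      have hgmono : MonotoneOn g (Set.Ioo 0 1) := hmono.monotoneOn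
      have hgae : AEMeasurable g unif :=
        aemeasurable_restrict_of_monotoneOn measurableSet_Ioo hgmono
      haveI : IsProbabilityMeasure (Measure.map g unif) := Measure.isProbabilityMeasure_map hgae
      have hFSl' : FSl = cdf (Measure.map g unif) := funext fun y => by
        rw [hFSl, cdf_eq_real, measureReal_def]; rfl
      have hQSl' : QSl = myQ (Measure.map g unif) := funext fun r => by
        rw [hQSl, myQ, hFSl']
      refine ⟨g, hQSl' ▸ myQ_map_ae_eq hgmono hgae hgint, hgint, ?_⟩
      intro r hr s hs hrs
      have hr' : (1 - s) ∈ Set.Ioo (0:ℝ) 1 := ⟨by linarith [hs.2], by linarith [hs.1]⟩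
      have hs' : (1 - r) ∈ Set.Ioo (0:ℝ) 1 := ⟨by linarith [hr.2], by linarith [hr.1]⟩
      have h1 : Q₂ r ≤ Q₂ s := hQ₂mono hr hs hrs
      have h2 : Q₂ (1 - s) ≤ Q₂ (1 - r) := hQ₂mono hr' hs' (by linarith)
      rw [hf r, hf s, hg r, hg s]
      linarith
    · -- g decreasing
      have hg'def : ∀ u, (fun u : ℝ => g (1 - u)) u = Q₁ (1 - u) + Q₂ u := by
        intro u
        show g (1 - u) = Q₁ (1 - u) + Q₂ u
        have h1 : (1 : ℝ) - (1 - u) = u := by ring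
        rw [hg (1 - u), h1]
      have hg'mono : MonotoneOn (fun u : ℝ => g (1 - u)) (Set.Ioo 0 1) := by
        intro a ha b hb hab
        have h1 : (1 - b) ∈ Set.Ioo (0:ℝ) 1 := ⟨by linarith [hb.2], by linarith [hb.1]⟩
        have h2 : (1 - a) ∈ Set.Ioo (0:ℝ) 1 := ⟨by linarith [ha.2], by linarith [ha.1]⟩
        exact hanti.antitoneOn h1 h2 (by linarith)
      have hg'ae : AEMeasurable (fun u : ℝ => g (1 - u)) unif :=
        aemeasurable_restrict_of_monotoneOn measurableSet_Ioo hg'mono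
      have hg'ae' : AEMeasurable (fun u : ℝ => g (1 - u))
          (Measure.map (fun u : ℝ => 1 - u) unif) := by
        rw [map_one_sub_unif]; exact hg'ae
      have hmapeq : Measure.map g (volume.restrict (Set.Ioo (0:ℝ) 1)) =
          Measure.map (fun u : ℝ => g (1 - u)) unif := by
        have hcomp : (fun u : ℝ => g (1 - u)) ∘ (fun u : ℝ => 1 - u) = g := by
          funext u
          simp only [Function.comp_apply]
          have h1 : (1 : ℝ) - (1 - u) = u := by ring
          rw [h1]
        calc Measure.map g (volume.restrict (Set.Ioo (0:ℝ) 1))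
            = Measure.map ((fun u : ℝ => g (1 - u)) ∘ (fun u : ℝ => 1 - u)) unif := by
              rw [hcomp]; rfl
          _ = Measure.map (fun u : ℝ => g (1 - u))
                (Measure.map (fun u : ℝ => 1 - u) unif) :=
              (hg'ae'.map_map_of_aemeasurable hT.aemeasurable).symm
          _ = Measure.map (fun u : ℝ => g (1 - u)) unif := by rw [map_one_sub_unif]
      haveI : IsProbabilityMeasure (Measure.map (fun u : ℝ => g (1 - u)) unif) :=
        Measure.isProbabilityMeasure_map hg'ae
      have hg'int : Integrable (fun u : ℝ => g (1 - u)) unif := by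
        have : (fun u : ℝ => g (1 - u)) = fun u => Q₁ (1 - u) + Q₂ u := funext hg'def
        rw [this]; exact hQ₁rint.add hQ₂int
      have hFSl' : FSl = cdf (Measure.map (fun u : ℝ => g (1 - u)) unif) :=
        funext fun y => by
          rw [hFSl, hmapeq, cdf_eq_real, measureReal_def]
      have hQSl' : QSl = myQ (Measure.map (fun u : ℝ => g (1 - u)) unif) :=
        funext fun r => by
          rw [hQSl, myQ, hFSl']
      refine ⟨fun u : ℝ => g (1 - u),
        hQSl' ▸ myQ_map_ae_eq hg'mono hg'ae hg'int, hg'int, ?_⟩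
      intro r hr s hs hrs
      have hr' : (1 - s) ∈ Set.Ioo (0:ℝ) 1 := ⟨by linarith [hs.2], by linarith [hs.1]⟩
      have hs' : (1 - r) ∈ Set.Ioo (0:ℝ) 1 := ⟨by linarith [hr.2], by linarith [hr.1]⟩
      have h1 : Q₁ r ≤ Q₁ s := hQ₁mono hr hs hrs
      have h2 : Q₁ (1 - s) ≤ Q₁ (1 - r) := hQ₁mono hr' hs' (by linarith)
      rw [hf r, hf s, hg'def r, hg'def s]
      linarith
  -- interval integrability
  have hIoc : ∀ a : ℝ, a ∈ Set.Ioo (0:ℝ) 1 → ∀ h : ℝ → ℝ, Integrable h unif →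
      IntervalIntegrable h volume a 1 := by
    intro a ha h hint
    rw [intervalIntegrable_iff, Set.uIoc_of_le ha.2.le]
    have h0 : IntegrableOn h (Set.Ioo 0 1) volume := hint
    have h1 : IntegrableOn h (Set.Ioo a 1) volume :=
      h0.mono_set (Set.Ioo_subset_Ioo ha.1.le le_rfl)
    rwa [IntegrableOn, ← Measure.restrict_congr_set Ioo_ae_eq_Ioc]
  have hfi_p : IntervalIntegrable f volume p 1 := hIoc p hp f hfint
  have hfi_q : IntervalIntegrable f volume q 1 := hIoc q hq f hfint
  have hgi_p : IntervalIntegrable gt volume p 1 := hIoc p hp gt hgt_int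
  have hgi_q : IntervalIntegrable gt volume q 1 := hIoc q hq gt hgt_int
  -- replace QSu, QSl by f, gt in the integrals
  have hne1 : ∀ᵐ x : ℝ ∂(volume : Measure ℝ), x ≠ 1 := by
    simp only [ae_iff, not_not, Set.setOf_eq_eq_singleton]
    exact measure_singleton 1
  have hcongr : ∀ a : ℝ, a ∈ Set.Ioo (0:ℝ) 1 → ∀ h₁ h₂ : ℝ → ℝ, h₁ =ᵐ[unif] h₂ →
      ∫ r in a..1, h₁ r = ∫ r in a..1, h₂ r := by
    intro a ha h₁ h₂ hae
    apply intervalIntegral.integral_congr_ae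
    have hae' : ∀ᵐ x ∂(volume : Measure ℝ), x ∈ Set.Ioo (0:ℝ) 1 → h₁ x = h₂ x :=
      (ae_restrict_iff' measurableSet_Ioo).mp hae
    filter_upwards [hae', hne1] with x hx hxne hmem
    rw [Set.uIoc_of_le ha.2.le] at hmem
    exact hx ⟨ha.1.trans hmem.1, lt_of_le_of_ne hmem.2 hxne⟩
  have hkey : ∀ a : ℝ, a ∈ Set.Ioo (0:ℝ) 1 →
      (1 / (1 - a)) * ∫ r in a..1, QSu r - (1 / (1 - a)) * ∫ r in a..1, QSl r =
        (1 / (1 - a)) * ∫ r in a..1, (f r - gt r) := by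
    intro a ha
    have ha' : (1:ℝ) - a ≠ 0 := by
      have h2 := ha.2
      intro hcon
      apply absurd h2
      intro hcon2
      linarith
    have hfa : IntervalIntegrable f volume a 1 := hIoc a ha f hfint
    have hga : IntervalIntegrable gt volume a 1 := hIoc a ha gt hgt_int
    set C : Real := (1 / (1 - a)) * (intervalIntegral QSl a 1 volume) with hC
    calc (1 / (1 - a)) * intervalIntegral (fun r => QSu r - C) a 1 volume
        = (1 / (1 - a)) * intervalIntegral (fun r => f r - C) a 1 volume := by
          congr 1
          apply intervalIntegral.integral_congr_ae
          have hae' : ∀ᵐ x ∂(volume : Measure ℝ), x ∈ Set.Ioo (0:ℝ) 1 → QSu x = f x :=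
            (ae_restrict_iff' measurableSet_Ioo).mp hQSuae
          filter_upwards [hae', hne1] with x hx hxne hmem
          rw [Set.uIoc_of_le ha.2.le] at hmem
          show QSu x - C = f x - C
          rw [hx ⟨ha.1.trans hmem.1, lt_of_le_of_ne hmem.2 hxne⟩]
      _ = (1 / (1 - a)) * ((∫ r in a..1, f r) - (1 - a) * C) := by
          rw [intervalIntegral.integral_sub hfa intervalIntegrable_const,
            intervalIntegral.integral_const, smul_eq_mul]
      _ = (1 / (1 - a)) * (∫ r in a..1, f r) - C := by
          field_simp
      _ = (1 / (1 - a)) * (∫ r in a..1, f r) - (1 / (1 - a)) * ∫ r in a..1, gt r := by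
          rw [hC, hcongr a ha QSl gt hgt_ae]
      _ = (1 / (1 - a)) * ∫ r in a..1, (f r - gt r) := by
          rw [intervalIntegral.integral_sub hfa hga, mul_sub]
  rw [hkey p hp, hkey q hq]
  exact tail_avg_mono hp hq hpq hmono_d ((hIoc p hp f hfint).sub (hIoc p hp gt hgt_int))
end

section
/- Let X be integrable with cdf F_X, u ∈ (0,1), and α ∈ [0,1]. Then π_X(F_X^{-1(α)}(u)) = π_X(F_X^{-1}(u)) - (F_X^{-1(α)}(u) - F_X^{-1}(u)) · (1 - u), where π_X(x) = E[(X-x)_+]. -/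
open MeasureTheory

private lemma max_sub_max_eq_min (x a t : ℝ) (hat : a ≤ t) :
    max (x - a) 0 - max (x - t) 0 = min (max (x - a) 0) (t - a) := by
  rcases le_total x a with h | h
  · rw [max_eq_right (by linarith : x - a ≤ 0), max_eq_right (by linarith : x - t ≤ 0)]
    rw [min_eq_left (by linarith)]
    ring
  · rcases le_total x t with h' | h'
    · rw [max_eq_left (by linarith : (0:ℝ) ≤ x - a), max_eq_right (by linarith : x - t ≤ 0)]
      rw [min_eq_left (by linarith)]
      ring
    · rw [max_eq_left (by linarith : (0:ℝ) ≤ x - a), max_eq_left (by linarith : (0:ℝ) ≤ x - t)]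
      rw [min_eq_right (by linarith)]
      ring

/-- Key lemma: if the cdf of `X` is constantly `u` on `(a,t)` with `a ≤ t`, then
`π(t) = π(a) - (t-a)(1-u)`. -/
private lemma stoploss_key {Ω : Type*} [MeasurableSpace Ω]
    (μ : Measure Ω) [IsProbabilityMeasure μ]
    (X : Ω → ℝ) (hm : Measurable X) (hX : Integrable X μ)
    (u a t : ℝ) (hu : u ∈ Set.Ioo (0:ℝ) 1) (hat : a ≤ t)
    (hF : ∀ y ∈ Set.Ioo a t, (μ {ω | X ω ≤ y}).toReal = u) :
    ∫ ω, max (X ω - t) 0 ∂μ =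
      (∫ ω, max (X ω - a) 0 ∂μ) - (t - a) * (1 - u) := by
  rcases eq_or_lt_of_le hat with rfl | hat'
  · simp
  -- measure of {X < t} is ofReal u
  have hmono : ∀ n : ℕ, (0:ℝ) < (n:ℝ) + 2 := by
    intro n; have : (0:ℝ) ≤ (n:ℝ) := Nat.cast_nonneg n; linarith
  have hfrac : ∀ n : ℕ, (0:ℝ) < (t - a) / ((n:ℝ) + 2) := by
    intro n; exact div_pos (by linarith) (hmono n)
  have hfrac' : ∀ n : ℕ, (t - a) / ((n:ℝ) + 2) < t - a := by
    intro n
    apply div_lt_self (by linarith)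
    have : (0:ℝ) ≤ (n:ℝ) := Nat.cast_nonneg n
    linarith
  have hconst : ∀ y ∈ Set.Ioo a t, μ {ω | X ω ≤ y} = ENNReal.ofReal u := by
    intro y hy
    rw [← hF y hy, ENNReal.ofReal_toReal (measure_ne_top μ _)]
  have hμt : μ {ω | X ω < t} = ENNReal.ofReal u := by
    have hU : {ω | X ω < t} = ⋃ n : ℕ, {ω | X ω ≤ t - (t - a) / ((n:ℝ) + 2)} := by
      ext ω
      simp only [Set.mem_setOf_eq, Set.mem_iUnion]
      constructor
      · intro h
        obtain ⟨n, hn⟩ := exists_nat_gt ((t - a) / (t - X ω))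
        refine ⟨n, ?_⟩
        have h1 : 0 < t - X ω := by linarith
        have h2 : t - a < (n:ℝ) * (t - X ω) := by rwa [div_lt_iff₀ h1] at hn
        have h3 : (t - a) / ((n:ℝ) + 2) ≤ t - X ω := by
          rw [div_le_iff₀ (hmono n)]
          nlinarith
        linarith
      · rintro ⟨n, hn⟩
        have := hfrac n
        linarith
    rw [hU]
    have hmon : Monotone (fun n : ℕ => {ω | X ω ≤ t - (t - a) / ((n:ℝ) + 2)}) := by
      intro m n hmn ω h
      simp only [Set.mem_setOf_eq] at h ⊢
      have h1 : (t - a) / ((n:ℝ) + 2) ≤ (t - a) / ((m:ℝ) + 2) := by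
        apply div_le_div_of_nonneg_left (by linarith) (hmono m)
        have : (m:ℝ) ≤ (n:ℝ) := Nat.cast_le.mpr hmn
        linarith
      linarith
    rw [hmon.measure_iUnion]
    have : ∀ n : ℕ, μ {ω | X ω ≤ t - (t - a) / ((n:ℝ) + 2)} = ENNReal.ofReal u := by
      intro n
      apply hconst
      constructor
      · have := hfrac' n; linarith
      · have := hfrac n; linarith
    simp only [this, iSup_const]
  -- measure of {X ≤ a} is ofReal u
  have hμa : μ {ω | X ω ≤ a} = ENNReal.ofReal u := by
    have hI : {ω | X ω ≤ a} = ⋂ n : ℕ, {ω | X ω ≤ a + (t - a) / ((n:ℝ) + 2)} := by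
      ext ω
      simp only [Set.mem_setOf_eq, Set.mem_iInter]
      constructor
      · intro h n
        have := hfrac n
        linarith
      · intro h
        by_contra hc
        push_neg at hc
        obtain ⟨n, hn⟩ := exists_nat_gt ((t - a) / (X ω - a))
        have h1 : 0 < X ω - a := by linarith
        have h2 : t - a < (n:ℝ) * (X ω - a) := by rwa [div_lt_iff₀ h1] at hn
        have h3 : (t - a) / ((n:ℝ) + 2) < X ω - a := by
          rw [div_lt_iff₀ (hmono n)]
          nlinarith
        have := h n
        linarith
    rw [hI]
    have hant : Antitone (fun n : ℕ => {ω | X ω ≤ a + (t - a) / ((n:ℝ) + 2)}) := by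
      intro m n hmn ω h
      simp only [Set.mem_setOf_eq] at h ⊢
      have h1 : (t - a) / ((n:ℝ) + 2) ≤ (t - a) / ((m:ℝ) + 2) := by
        apply div_le_div_of_nonneg_left (by linarith) (hmono m)
        have : (m:ℝ) ≤ (n:ℝ) := Nat.cast_le.mpr hmn
        linarith
      linarith
    rw [hant.measure_iInter
      (fun n => (measurableSet_le hm measurable_const).nullMeasurableSet)
      ⟨0, measure_ne_top μ _⟩]
    have : ∀ n : ℕ, μ {ω | X ω ≤ a + (t - a) / ((n:ℝ) + 2)} = ENNReal.ofReal u := by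
      intro n
      apply hconst
      constructor
      · have := hfrac n; linarith
      · have := hfrac' n; linarith
    simp only [this, iInf_const]
  -- μ (a < X < t) = 0
  have hnull : μ {ω | a < X ω ∧ X ω < t} = 0 := by
    have hset : {ω | a < X ω ∧ X ω < t} = {ω | X ω < t} \ {ω | X ω ≤ a} := by
      ext ω
      simp only [Set.mem_setOf_eq, Set.mem_diff, not_le]
      tauto
    rw [hset, measure_diff (fun ω h => by simp only [Set.mem_setOf_eq] at h ⊢; linarith)
      (measurableSet_le hm measurable_const).nullMeasurableSet (measure_ne_top μ _),
      hμt, hμa, tsub_self]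
  -- μ {t ≤ X} = 1 - ofReal u
  have hge : μ {ω | t ≤ X ω} = 1 - ENNReal.ofReal u := by
    have hset : {ω | t ≤ X ω} = {ω | X ω < t}ᶜ := by
      ext ω; simp [not_lt]
    rw [hset, measure_compl (measurableSet_lt hm measurable_const) (measure_ne_top μ _),
      hμt, measure_univ]
  have hgeR : (μ {ω | t ≤ X ω}).toReal = 1 - u := by
    rw [hge, ENNReal.toReal_sub_of_le (by
        simpa using ENNReal.ofReal_le_one.mpr hu.2.le) (by simp)]
    simp [ENNReal.toReal_ofReal hu.1.le]
  -- a.e. equality with indicator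
  have hae : (fun ω => min (max (X ω - a) 0) (t - a)) =ᵐ[μ]
      Set.indicator {ω | t ≤ X ω} (fun _ => t - a) := by
    have hns : ∀ᵐ ω ∂μ, ¬(a < X ω ∧ X ω < t) := by
      rw [ae_iff]
      simpa using hnull
    filter_upwards [hns] with ω hω
    by_cases ht : t ≤ X ω
    · simp only [Set.indicator_apply, Set.mem_setOf_eq, if_pos ht]
      rw [max_eq_left (by linarith : (0:ℝ) ≤ X ω - a)]
      exact min_eq_right (by linarith)
    · simp only [Set.indicator_apply, Set.mem_setOf_eq, if_neg ht]
      push_neg at ht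
      have hxa : X ω ≤ a := by
        by_contra hc
        push_neg at hc
        exact hω ⟨hc, ht⟩
      rw [max_eq_right (by linarith : X ω - a ≤ 0)]
      exact min_eq_left (by linarith)
  -- integral of the min
  have hint_a : Integrable (fun ω => max (X ω - a) 0) μ :=
    (hX.sub (integrable_const a)).pos_part
  have hint_t : Integrable (fun ω => max (X ω - t) 0) μ :=
    (hX.sub (integrable_const t)).pos_part
  have hmin : (∫ ω, min (max (X ω - a) 0) (t - a) ∂μ) = (t - a) * (1 - u) := by
    rw [integral_congr_ae hae, integral_indicator_const _ (measurableSet_le measurable_const hm),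
      measureReal_def, hgeR]
    simp [mul_comm]
  have hsub : (∫ ω, max (X ω - a) 0 ∂μ) - (∫ ω, max (X ω - t) 0 ∂μ) = (t - a) * (1 - u) := by
    rw [← integral_sub hint_a hint_t, ← hmin]
    apply integral_congr_ae
    filter_upwards with ω
    exact max_sub_max_eq_min (X ω) a t hat
  linarith

/-- `π_X(F^{-1(α)}(u)) = π_X(F⁻¹(u)) - (F^{-1(α)}(u) - F⁻¹(u))(1-u)`. -/
theorem stoploss_gen_inverse_shift {Ω : Type*} [MeasurableSpace Ω]
    (μ : Measure Ω) [IsProbabilityMeasure μ]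
    (X : Ω → ℝ) (hX : Integrable X μ)
    (u α : ℝ) (hu : u ∈ Set.Ioo (0:ℝ) 1) (hα : α ∈ Set.Icc (0:ℝ) 1)
    (F Q R : ℝ → ℝ)
    (hF : ∀ y, F y = (μ {ω | X ω ≤ y}).toReal)
    (hQ : ∀ q, Q q = sInf {x : ℝ | q ≤ F x})
    (hR : ∀ q, R q = sSup {x : ℝ | F x ≤ q}) :
    ∫ ω, max (X ω - ((1 - α) * Q u + α * R u)) 0 ∂μ =
      (∫ ω, max (X ω - Q u) 0 ∂μ) -
        (((1 - α) * Q u + α * R u) - Q u) * (1 - u) := by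
  -- replace X by a measurable representative
  obtain ⟨X', hX'meas, hX'ae⟩ := hX.aestronglyMeasurable
  have hm : Measurable X' := hX'meas.measurable
  have hX' : Integrable X' μ := hX.congr hX'ae
  have hFset : ∀ y, {ω | X ω ≤ y} =ᵐ[μ] {ω | X' ω ≤ y} := by
    intro y
    filter_upwards [hX'ae] with ω hω
    show (X ω ≤ y) = (X' ω ≤ y)
    rw [hω]
  have hF' : ∀ y, F y = (μ {ω | X' ω ≤ y}).toReal := by
    intro y
    rw [hF y, measure_congr (hFset y)]
  -- Monotonicity of F
  have hFmono : Monotone F := by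
    intro x y hxy
    rw [hF' x, hF' y]
    exact ENNReal.toReal_mono (measure_ne_top μ _)
      (measure_mono (fun ω h => le_trans h hxy))
  -- F equals the cdf of the pushforward measure
  set ν : Measure ℝ := μ.map X' with hν
  have : IsProbabilityMeasure ν := Measure.isProbabilityMeasure_map hm.aemeasurable
  have hFcdf : ∀ y, F y = ProbabilityTheory.cdf ν y := by
    intro y
    rw [ProbabilityTheory.cdf_eq_real, measureReal_def, hF' y, hν,
      Measure.map_apply hm measurableSet_Iic]
    rfl
  -- existence of points with large/small F
  have hex_hi : ∃ x : ℝ, u < F x := by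
    have h := (ProbabilityTheory.tendsto_cdf_atTop ν).eventually_const_lt hu.2
    obtain ⟨x, hx⟩ := h.exists
    exact ⟨x, by rw [hFcdf]; exact hx⟩
  have hex_lo : ∃ x : ℝ, F x < u := by
    have h := (ProbabilityTheory.tendsto_cdf_atBot ν).eventually_lt_const hu.1
    obtain ⟨x, hx⟩ := h.exists
    exact ⟨x, by rw [hFcdf]; exact hx⟩
  obtain ⟨xhi, hxhi⟩ := hex_hi
  obtain ⟨xlo, hxlo⟩ := hex_lo
  -- the two sets
  set S₁ : Set ℝ := {x : ℝ | u ≤ F x} with hS₁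
  set S₂ : Set ℝ := {x : ℝ | F x ≤ u} with hS₂
  have hS₁ne : S₁.Nonempty := ⟨xhi, hxhi.le⟩
  have hS₂ne : S₂.Nonempty := ⟨xlo, hxlo.le⟩
  have hS₁bdd : BddBelow S₁ := by
    refine ⟨xlo, fun x hx => ?_⟩
    by_contra hc
    push_neg at hc
    exact absurd (le_trans hx (hFmono hc.le)) (not_le.mpr hxlo)
  have hS₂bdd : BddAbove S₂ := by
    refine ⟨xhi, fun x hx => ?_⟩
    by_contra hc
    push_neg at hc
    exact absurd (le_trans (hFmono hc.le) hx) (not_le.mpr hxhi)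
  set a : ℝ := Q u with ha
  set b : ℝ := R u with hb
  have haS : a = sInf S₁ := by rw [ha, hQ]
  have hbS : b = sSup S₂ := by rw [hb, hR]
  -- a ≤ b
  have hab : a ≤ b := by
    by_contra hc
    push_neg at hc
    set c := (a + b) / 2 with hcdef
    have hcb : b < c := by rw [hcdef]; linarith
    have hca : c < a := by rw [hcdef]; linarith
    have hcS₂ : c ∈ S₂ := by
      rw [hS₂, Set.mem_setOf_eq]
      rw [haS] at hca
      have : c ∉ S₁ := fun h => absurd (csInf_le hS₁bdd h) (not_le.mpr hca)
      rw [hS₁, Set.mem_setOf_eq] at this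
      push_neg at this
      exact this.le
    have := le_csSup hS₂bdd hcS₂
    rw [← hbS] at this
    linarith
  -- t between a and b
  set t : ℝ := (1 - α) * a + α * b with htdef
  have hta : a ≤ t := by
    have h1 : 0 ≤ α := hα.1
    have h2 : α ≤ 1 := hα.2
    rw [htdef]; nlinarith
  have htb : t ≤ b := by
    have h1 : 0 ≤ α := hα.1
    have h2 : α ≤ 1 := hα.2
    rw [htdef]; nlinarith
  -- F = u on (a, t)
  have hFu : ∀ y ∈ Set.Ioo a t, (μ {ω | X' ω ≤ y}).toReal = u := by
    intro y hy
    have hya : a < y := hy.1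
    have hyb : y < b := lt_of_lt_of_le hy.2 htb
    have h1 : u ≤ F y := by
      rw [haS] at hya
      obtain ⟨z, hzS, hzy⟩ := (csInf_lt_iff hS₁bdd hS₁ne).mp hya
      exact le_trans hzS (hFmono hzy.le)
    have h2 : F y ≤ u := by
      rw [hbS] at hyb
      obtain ⟨z, hzS, hzy⟩ := (lt_csSup_iff hS₂bdd hS₂ne).mp hyb
      exact le_trans (hFmono hzy.le) hzS
    rw [← hF' y]
    linarith
  -- apply the key lemma to X'
  have hkey := stoploss_key μ X' hm hX' u a t hu hta hFu
  -- transfer back to X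
  have hint1 : ∫ ω, max (X ω - t) 0 ∂μ = ∫ ω, max (X' ω - t) 0 ∂μ := by
    apply integral_congr_ae
    filter_upwards [hX'ae] with ω hω
    rw [hω]
  have hint2 : ∫ ω, max (X ω - a) 0 ∂μ = ∫ ω, max (X' ω - a) 0 ∂μ := by
    apply integral_congr_ae
    filter_upwards [hX'ae] with ω hω
    rw [hω]
  calc ∫ ω, max (X ω - t) 0 ∂μ = ∫ ω, max (X' ω - t) 0 ∂μ := hint1
    _ = (∫ ω, max (X' ω - a) 0 ∂μ) - (t - a) * (1 - u) := hkey
    _ = (∫ ω, max (X ω - a) 0 ∂μ) - (t - a) * (1 - u) := by rw [hint2]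
end
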